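/- arXiv:1605.03445 — 8 statements merged into one kernel-verified Lean document; each statement's English description precedes it below -/
import Mathlib

section
/- Let d > 0, λ ∈ [0,1), u_max ∈ ℝ, and let (x_k)_{k∈ℤ} be strictly increasing with x_{k+1} - x_k ≥ d for all k. Define conductances c_{i,j} = e^{λ(x_i + x_j) - |x_j - x_i| + u_{ij}} for i ≠ j where all u_{ij} = u_{ji} ≤ u_max and u_{ij} ≥ u_min for some u_min. Then there is a constant K, depending only on d, λ, u_max, u_min, such that for every k ∈ ℤ: ∑_{j > k} c_{k,j} ≤ K · c_{k,k+1} and ∑_{j < k} c_{k,j} ≤ K · c_{k-1,k}. In particular ∑_{j≠k} c_{k,j} ≤ K (c_{k-1,k} + c_{k,k+1}). -/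
/-!
Moving the far endpoint of a bond away from `k` by a distance `t` changes the exponent
`λ (x_i + x_j) - |x_j - x_i|` by at most `-(1 - λ) t`: the bias can recover at most a fraction `λ`
of the distance penalty. Since `n` further steps cover a distance at least `n d`, the conductance
`c_{k, k+1+n}` is at most `e^{u_max - u_min} r^n c_{k,k+1}` with `r = e^{-(1-λ) d} < 1`, and likewise
on the left. Summing the geometric series gives `K = e^{u_max - u_min} / (1 - r)`.
-/

open Real

lemma HasSum.of_add_one_add_nat_of_sub_one_sub_nat {M : Type*} [AddCommGroup M] [TopologicalSpace M]
    [IsTopologicalAddGroup M] {f : ℤ → M} {k : ℤ} {a b : M} (hk : f k = 0)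
    (ha : HasSum (fun n : ℕ => f (k + 1 + n)) a) (hb : HasSum (fun n : ℕ => f (k - 1 - n)) b) :
    HasSum f (a + b) := by
  have hnat : HasSum (fun n : ℕ => f (k + n)) a := by
    rw [← hasSum_nat_add_iff' 1]
    simpa [hk, add_assoc, add_comm (1 : ℤ)] using ha
  have hneg : HasSum (fun n : ℕ => f (k + -(n + 1))) b := by
    convert hb using 3
    ring
  exact (Equiv.addLeft k).hasSum_iff.mp (hnat.of_nat_of_neg_add_one hneg)

lemma summable_and_tsum_le_of_le_geometric {f : ℕ → ℝ} {C r : ℝ} (hf : ∀ n, 0 ≤ f n)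
    (hr0 : 0 ≤ r) (hr1 : r < 1) (hle : ∀ n, f n ≤ C * r ^ n) :
    Summable f ∧ ∑' n, f n ≤ C / (1 - r) := by
  have hgeom : HasSum (fun n => C * r ^ n) (C / (1 - r)) := by
    simpa [div_eq_mul_inv] using (hasSum_geometric_of_lt_one hr0 hr1).mul_left C
  have hsum : Summable f := hgeom.summable.of_nonneg_of_le hf hle
  exact ⟨hsum, hasSum_le hle hsum.hasSum hgeom⟩

lemma mul_le_sub_of_le_sub_succ {x : ℤ → ℝ} {d : ℝ} (hgap : ∀ k, d ≤ x (k + 1) - x k)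
    (m : ℤ) : ∀ n : ℕ, n * d ≤ x (m + n) - x m
  | 0 => by simp
  | n + 1 => by
    have := mul_le_sub_of_le_sub_succ hgap m n
    have := hgap (m + n)
    push_cast
    rw [← add_assoc]
    linarith

lemma mott_exponent_le_of_abs_sub_eq {lam p q q' : ℝ} (hlam : 0 ≤ lam)
    (hbtw : |q' - p| = |q - p| + |q' - q|) :
    lam * (p + q') - |q' - p| ≤ lam * (p + q) - |q - p| - (1 - lam) * |q' - q| := by
  have := mul_le_mul_of_nonneg_left (le_abs_self (q' - q)) hlam
  linarith

lemma exp_neg_mul_le_pow {a d t : ℝ} (ha : 0 ≤ a) {n : ℕ} (ht : n * d ≤ t) :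
    exp (-(a * t)) ≤ exp (-(a * d)) ^ n := by
  rw [← exp_nat_mul, exp_le_exp]
  nlinarith

section Conductance

variable {d lam umin umax : ℝ} {x : ℤ → ℝ} {u c : ℤ → ℤ → ℝ}

lemma conductance_pos
    (hc : ∀ i j, i ≠ j → c i j = exp (lam * (x i + x j) - |x j - x i| + u i j))
    {i j : ℤ} (hij : i ≠ j) : 0 < c i j :=
  (hc i j hij).symm ▸ exp_pos _

lemma conductance_nonneg
    (hc : ∀ i j, i ≠ j → c i j = exp (lam * (x i + x j) - |x j - x i| + u i j))
    (hc0 : ∀ i, c i i = 0) (i j : ℤ) : 0 ≤ c i j := by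
  rcases eq_or_ne i j with rfl | hij
  · exact (hc0 i).ge
  · exact (conductance_pos hc hij).le

lemma conductance_comm (hsymm : ∀ i j, u i j = u j i)
    (hc : ∀ i j, i ≠ j → c i j = exp (lam * (x i + x j) - |x j - x i| + u i j))
    {i j : ℤ} (hij : i ≠ j) : c i j = c j i := by
  rw [hc i j hij, hc j i hij.symm, hsymm, abs_sub_comm, add_comm (x i)]

lemma conductance_le_of_abs_sub_eq (hlam : 0 ≤ lam) (hu : ∀ i j, umin ≤ u i j ∧ u i j ≤ umax)
    (hc : ∀ i j, i ≠ j → c i j = exp (lam * (x i + x j) - |x j - x i| + u i j))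
    {k i j : ℤ} (hi : k ≠ i) (hj : k ≠ j) (hbtw : |x j - x k| = |x i - x k| + |x j - x i|) :
    c k j ≤ exp (umax - umin) * c k i * exp (-((1 - lam) * |x j - x i|)) := by
  rw [hc k j hj, hc k i hi, ← exp_add, ← exp_add, exp_le_exp]
  linarith [mott_exponent_le_of_abs_sub_eq hlam hbtw, (hu k j).2, (hu k i).1]

lemma conductance_add_one_add_le (hlam0 : 0 ≤ lam) (hlam1 : lam < 1) (hx : Monotone x)
    (hgap : ∀ k, d ≤ x (k + 1) - x k) (hu : ∀ i j, umin ≤ u i j ∧ u i j ≤ umax)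
    (hc : ∀ i j, i ≠ j → c i j = exp (lam * (x i + x j) - |x j - x i| + u i j))
    (k : ℤ) (n : ℕ) :
    c k (k + 1 + n) ≤ exp (umax - umin) * c k (k + 1) * exp (-((1 - lam) * d)) ^ n := by
  have h₁ : x k ≤ x (k + 1) := hx (by omega)
  have h₂ : x (k + 1) ≤ x (k + 1 + n) := hx (by omega)
  have hpos := conductance_pos hc (show k ≠ k + 1 by omega)
  refine (conductance_le_of_abs_sub_eq (i := k + 1) hlam0 hu hc (by omega) (by omega) ?_).trans ?_
  · rw [abs_of_nonneg (by linarith), abs_of_nonneg (by linarith), abs_of_nonneg (by linarith)]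
    ring
  · gcongr
    exact exp_neg_mul_le_pow (by linarith) <|
      (mul_le_sub_of_le_sub_succ hgap (k + 1) n).trans (le_abs_self _)

lemma conductance_sub_one_sub_le (hlam0 : 0 ≤ lam) (hlam1 : lam < 1) (hx : Monotone x)
    (hgap : ∀ k, d ≤ x (k + 1) - x k) (hu : ∀ i j, umin ≤ u i j ∧ u i j ≤ umax)
    (hc : ∀ i j, i ≠ j → c i j = exp (lam * (x i + x j) - |x j - x i| + u i j))
    (k : ℤ) (n : ℕ) :
    c k (k - 1 - n) ≤ exp (umax - umin) * c k (k - 1) * exp (-((1 - lam) * d)) ^ n := by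
  have h₁ : x (k - 1) ≤ x k := hx (by omega)
  have h₂ : x (k - 1 - n) ≤ x (k - 1) := hx (by omega)
  have hpos := conductance_pos hc (show k ≠ k - 1 by omega)
  refine (conductance_le_of_abs_sub_eq (i := k - 1) hlam0 hu hc (by omega) (by omega) ?_).trans ?_
  · rw [abs_of_nonpos (by linarith), abs_of_nonpos (by linarith), abs_of_nonpos (by linarith)]
    ring
  · gcongr
    have hdist := mul_le_sub_of_le_sub_succ hgap (k - 1 - n) n
    rw [sub_add_cancel] at hdist
    rw [abs_sub_comm]
    exact exp_neg_mul_le_pow (by linarith) (hdist.trans (le_abs_self _))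

end Conductance

/-- With conductances `c i j = exp(λ(x_i+x_j) - |x_j-x_i| + u i j)` (for `i ≠ j`),
`u` symmetric with `u_min ≤ u ≤ u_max`, gaps at least `d > 0`, `λ ∈ [0,1)`, there is a constant
`K` depending only on `d, λ, u_max, u_min` such that `∑_{j>k} c_{k,j} ≤ K c_{k,k+1}`,
`∑_{j<k} c_{k,j} ≤ K c_{k-1,k}` and `∑_{j≠k} c_{k,j} ≤ K (c_{k-1,k} + c_{k,k+1})`. -/
theorem stmt3 (d lam umin umax : ℝ) (hd : 0 < d) (hlam0 : 0 ≤ lam) (hlam1 : lam < 1) :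
    ∃ K : ℝ, 0 < K ∧
      ∀ (x : ℤ → ℝ) (u : ℤ → ℤ → ℝ) (c : ℤ → ℤ → ℝ),
        StrictMono x → (∀ k : ℤ, d ≤ x (k + 1) - x k) →
        (∀ i j : ℤ, u i j = u j i) →
        (∀ i j : ℤ, umin ≤ u i j ∧ u i j ≤ umax) →
        (∀ i j : ℤ, i ≠ j →
          c i j = Real.exp (lam * (x i + x j) - |x j - x i| + u i j)) →
        (∀ i : ℤ, c i i = 0) →
        ∀ k : ℤ,
          (∑' n : ℕ, c k (k + 1 + n)) ≤ K * c k (k + 1) ∧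
          (∑' n : ℕ, c k (k - 1 - n)) ≤ K * c (k - 1) k ∧
          (∑' j : ℤ, c k j) ≤ K * (c (k - 1) k + c k (k + 1)) := by
  set r := exp (-((1 - lam) * d))
  have hr0 : 0 ≤ r := (exp_pos _).le
  have hr1 : r < 1 := exp_lt_one_iff.mpr (by nlinarith)
  have hr1' : 0 < 1 - r := by linarith
  refine ⟨exp (umax - umin) / (1 - r), by positivity, ?_⟩
  intro x u c hx hgap hsymm hu hc hc0 k
  obtain ⟨hsumR, hR⟩ := summable_and_tsum_le_of_le_geometric (fun n => conductance_nonneg hc hc0 _ _)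
    hr0 hr1 (conductance_add_one_add_le hlam0 hlam1 hx.monotone hgap hu hc k)
  obtain ⟨hsumL, hL⟩ := summable_and_tsum_le_of_le_geometric (fun n => conductance_nonneg hc hc0 _ _)
    hr0 hr1 (conductance_sub_one_sub_le hlam0 hlam1 hx.monotone hgap hu hc k)
  rw [← div_mul_eq_mul_div] at hR hL
  rw [conductance_comm hsymm hc (show k ≠ k - 1 by omega)] at hL
  refine ⟨hR, hL, ?_⟩
  rw [(HasSum.of_add_one_add_nat_of_sub_one_sub_nat (hc0 k) hsumR.hasSum hsumL.hasSum).tsum_eq]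
  linarith
end

section
/- Under the same setup (strictly increasing (x_k) with gaps ≥ d > 0, λ ∈ [0,1), conductances c_{i,j} = e^{λ(x_i+x_j) - |x_j - x_i| + u_{ij}} with u_min ≤ u_{ij} ≤ u_max), there exists a constant K (depending only on d, λ, u_min, u_max) such that for all i ∈ ℤ and all integers s ≥ 1: ∑_{j : |j-i| > s} c_{i,j} ≤ K e^{-d s (1-λ)} (c_{i-1,i} + c_{i,i+1}). Consequently the one-step jump probability satisfies ∑_{j:|j-i|>s} c_{i,j} / ∑_{k} c_{i,k} ≤ K e^{-ds(1-λ)}. -/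
private lemma stmt4_gap (d : ℝ) (x : ℤ → ℝ) (hgap : ∀ k : ℤ, d ≤ x (k + 1) - x k) :
    ∀ (a : ℤ) (n : ℕ), (n : ℝ) * d ≤ x (a + n) - x a := by
  intro a n
  induction n with
  | zero => simp
  | succ n ih =>
    have h := hgap (a + n)
    have hcast : (a : ℤ) + ((n : ℕ) + 1 : ℕ) = (a + n) + 1 := by push_cast; ring
    rw [hcast]
    push_cast
    linarith

theorem stmt4 (d lam umin umax : ℝ) (hd : 0 < d) (hlam0 : 0 ≤ lam) (hlam1 : lam < 1) :
    ∃ K : ℝ, 0 < K ∧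
      ∀ (x : ℤ → ℝ) (u : ℤ → ℤ → ℝ) (c : ℤ → ℤ → ℝ),
        StrictMono x → (∀ k : ℤ, d ≤ x (k + 1) - x k) →
        (∀ i j : ℤ, u i j = u j i) →
        (∀ i j : ℤ, umin ≤ u i j ∧ u i j ≤ umax) →
        (∀ i j : ℤ, i ≠ j →
          c i j = Real.exp (lam * (x i + x j) - |x j - x i| + u i j)) →
        (∀ i : ℤ, c i i = 0) →
        ∀ (i : ℤ) (s : ℕ), 1 ≤ s →
          (∑' j : {j : ℤ // (s : ℤ) < |j - i|}, c i (j : ℤ))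
              ≤ K * Real.exp (-d * s * (1 - lam)) * (c (i - 1) i + c i (i + 1)) ∧
          (∑' j : {j : ℤ // (s : ℤ) < |j - i|}, c i (j : ℤ)) / (∑' k : ℤ, c i k)
              ≤ K * Real.exp (-d * s * (1 - lam)) := by
  set q : ℝ := Real.exp (-(1 - lam) * d) with hq
  have hq0 : 0 < q := Real.exp_pos _
  have hq1 : q < 1 := by
    rw [hq, Real.exp_lt_one_iff]
    nlinarith
  set E : ℝ := Real.exp (umax - umin) with hE
  have hE0 : 0 < E := Real.exp_pos _
  refine ⟨E / (1 - q), div_pos hE0 (by linarith), ?_⟩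
  intro x u c hmono hgap husym hubound hc hcdiag i s hs
  -- basic positivity facts
  have hc1 : 0 < c i (i + 1) := by
    rw [hc i (i + 1) (by omega)]; exact Real.exp_pos _
  have hc0 : 0 < c i (i - 1) := by
    rw [hc i (i - 1) (by omega)]; exact Real.exp_pos _
  have hsymc : c (i - 1) i = c i (i - 1) := by
    rw [hc (i - 1) i (by omega), hc i (i - 1) (by omega), abs_sub_comm, husym]
    ring_nf
  have hfnn : ∀ j : ℤ, 0 ≤ c i j := by
    intro j
    by_cases hij : i = j
    · rw [← hij, hcdiag]
    · rw [hc i j hij]; exact (Real.exp_pos _).le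
  -- key pointwise bounds
  have keyR : ∀ n : ℕ, c i (i + 1 + n) ≤ E * q ^ n * c i (i + 1) := by
    intro n
    have hne : i ≠ i + 1 + (n : ℤ) := by omega
    rw [hc _ _ hne, hc _ _ (by omega : i ≠ i + 1)]
    have hg1 : (n : ℝ) * d ≤ x (i + 1 + n) - x (i + 1) := stmt4_gap d x hgap (i + 1) n
    have hm1 : x i < x (i + 1) := hmono (by omega)
    have hm2 : x i < x (i + 1 + (n : ℤ)) := hmono (by omega)
    rw [abs_of_nonneg (by linarith : (0:ℝ) ≤ x (i + 1 + (n : ℤ)) - x i),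
        abs_of_nonneg (by linarith : (0:ℝ) ≤ x (i + 1) - x i)]
    have hu1 := hubound i (i + 1 + (n : ℤ))
    have hu2 := hubound i (i + 1)
    have hEq : E * q ^ n * Real.exp (lam * (x i + x (i + 1)) - (x (i + 1) - x i) + u i (i + 1))
        = Real.exp ((umax - umin) + (n : ℝ) * (-(1 - lam) * d)
            + (lam * (x i + x (i + 1)) - (x (i + 1) - x i) + u i (i + 1))) := by
      rw [hq, hE, ← Real.exp_nat_mul, ← Real.exp_add, ← Real.exp_add]
    rw [hEq]
    apply Real.exp_le_exp.mpr
    have hF := mul_le_mul_of_nonneg_left hg1 (by linarith : (0:ℝ) ≤ 1 - lam)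
    nlinarith [hu1.1, hu1.2, hu2.1, hu2.2]
  have keyL : ∀ n : ℕ, c i (i - 1 - n) ≤ E * q ^ n * c i (i - 1) := by
    intro n
    have hne : i ≠ i - 1 - (n : ℤ) := by omega
    rw [hc _ _ hne, hc _ _ (by omega : i ≠ i - 1)]
    have hg1' : (n : ℝ) * d ≤ x (i - 1 - n + n) - x (i - 1 - n) := stmt4_gap d x hgap (i - 1 - n) n
    have hre : i - 1 - (n : ℤ) + (n : ℤ) = i - 1 := by ring
    rw [hre] at hg1'
    have hm1 : x (i - 1) < x i := hmono (by omega)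
    have hm2 : x (i - 1 - (n : ℤ)) < x i := hmono (by omega)
    rw [abs_of_nonpos (by linarith : x (i - 1 - (n : ℤ)) - x i ≤ (0:ℝ)),
        abs_of_nonpos (by linarith : x (i - 1) - x i ≤ (0:ℝ))]
    have hu1 := hubound i (i - 1 - (n : ℤ))
    have hu2 := hubound i (i - 1)
    have hEq : E * q ^ n * Real.exp (lam * (x i + x (i - 1)) - -(x (i - 1) - x i) + u i (i - 1))
        = Real.exp ((umax - umin) + (n : ℝ) * (-(1 - lam) * d)
            + (lam * (x i + x (i - 1)) - -(x (i - 1) - x i) + u i (i - 1))) := by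
      rw [hq, hE, ← Real.exp_nat_mul, ← Real.exp_add, ← Real.exp_add]
    rw [hEq]
    apply Real.exp_le_exp.mpr
    have hnd : (0:ℝ) ≤ (n : ℝ) * d := by positivity
    have hF := mul_le_mul_of_nonneg_left hg1' (by linarith : (0:ℝ) ≤ 1 + lam)
    nlinarith [hu1.1, hu1.2, hu2.1, hu2.2, mul_nonneg hlam0 hnd]
  -- majorant on ℤ via Int.rec
  set fR : ℕ → ℝ := fun n => E * q ^ (s + n) * c i (i + 1) with hfR
  set fL : ℕ → ℝ := fun n => E * q ^ (s + n) * c i (i - 1) with hfL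
  set g : ℤ → ℝ := fun k => Int.rec fR fL k with hg
  have hfRS : Summable fR := by
    have h := (summable_geometric_of_lt_one hq0.le hq1).mul_left (E * q ^ s * c i (i + 1))
    exact h.congr (fun n => by rw [hfR]; simp only []; rw [pow_add]; ring)
  have hfLS : Summable fL := by
    have h := (summable_geometric_of_lt_one hq0.le hq1).mul_left (E * q ^ s * c i (i - 1))
    exact h.congr (fun n => by rw [hfL]; simp only []; rw [pow_add]; ring)
  have hgS : Summable g := Summable.int_rec hfRS hfLS
  have hgnn : ∀ k : ℤ, 0 ≤ g k := by
    rintro (m | m)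
    · show 0 ≤ fR m; rw [hfR]; positivity
    · show 0 ≤ fL m; rw [hfL]; positivity
  -- the injection
  set ι : {j : ℤ // (s : ℤ) < |j - i|} → ℤ :=
    fun b => if i < (b : ℤ) then (((b : ℤ) - i - s - 1).toNat : ℤ)
      else Int.negSucc (i - (b : ℤ) - s - 1).toNat with hι
  have habs : ∀ b : {j : ℤ // (s : ℤ) < |j - i|}, (s : ℤ) < ((b : ℤ) - i).natAbs := by
    intro b
    have := b.2
    rwa [Int.abs_eq_natAbs] at this
  have hιinj : Function.Injective ι := by
    rintro ⟨a, ha⟩ ⟨b, hb⟩ hab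
    have ha' := habs ⟨a, ha⟩
    have hb' := habs ⟨b, hb⟩
    simp only at ha' hb'
    simp only [hι] at hab
    by_cases h1 : i < a <;> by_cases h2 : i < b
    · rw [if_pos h1, if_pos h2] at hab
      simp only [Subtype.mk.injEq]; omega
    · rw [if_pos h1, if_neg h2, Int.negSucc_eq] at hab
      simp only [Subtype.mk.injEq]; omega
    · rw [if_neg h1, if_pos h2, Int.negSucc_eq] at hab
      simp only [Subtype.mk.injEq]; omega
    · rw [if_neg h1, if_neg h2, Int.negSucc_eq, Int.negSucc_eq] at hab
      simp only [Subtype.mk.injEq]; omega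
  have hpt : ∀ b : {j : ℤ // (s : ℤ) < |j - i|}, c i (b : ℤ) ≤ g (ι b) := by
    rintro ⟨j, hj⟩
    have hj' := habs ⟨j, hj⟩
    simp only at hj'
    simp only [hι]
    by_cases hij : i < j
    · rw [if_pos hij]
      show c i j ≤ fR ((j - i - s - 1).toNat)
      have hb := keyR (s + (j - i - s - 1).toNat)
      have hjeq : i + 1 + ((s + (j - i - s - 1).toNat : ℕ) : ℤ) = j := by push_cast; omega
      rw [hjeq] at hb
      exact hb
    · rw [if_neg hij]
      show c i j ≤ fL ((i - j - s - 1).toNat)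
      have hb := keyL (s + (i - j - s - 1).toNat)
      have hjeq : i - 1 - ((s + (i - j - s - 1).toNat : ℕ) : ℤ) = j := by push_cast; omega
      rw [hjeq] at hb
      exact hb
  have hfS : Summable (fun b : {j : ℤ // (s : ℤ) < |j - i|} => c i (b : ℤ)) :=
    Summable.of_nonneg_of_le (fun b => hfnn _) hpt (hgS.comp_injective hιinj)
  have htail : (∑' j : {j : ℤ // (s : ℤ) < |j - i|}, c i (j : ℤ)) ≤ (∑' n, fR n) + ∑' n, fL n := by
    have h1 := Summable.tsum_le_tsum_of_inj ι hιinj (fun k _ => hgnn k) hpt hfS hgS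
    have h2 : ∑' k : ℤ, g k = (∑' n, fR n) + ∑' n, fL n := tsum_int_rec hfRS hfLS
    rw [h2] at h1
    exact h1
  have hRsum : ∑' n, fR n = E * q ^ s * c i (i + 1) * (1 - q)⁻¹ := by
    calc ∑' n, fR n = ∑' n : ℕ, (E * q ^ s * c i (i + 1)) * q ^ n :=
          tsum_congr (fun n => by rw [hfR]; simp only []; rw [pow_add]; ring)
      _ = (E * q ^ s * c i (i + 1)) * (1 - q)⁻¹ := by
          rw [tsum_mul_left, tsum_geometric_of_lt_one hq0.le hq1]
  have hLsum : ∑' n, fL n = E * q ^ s * c i (i - 1) * (1 - q)⁻¹ := by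
    calc ∑' n, fL n = ∑' n : ℕ, (E * q ^ s * c i (i - 1)) * q ^ n :=
          tsum_congr (fun n => by rw [hfL]; simp only []; rw [pow_add]; ring)
      _ = (E * q ^ s * c i (i - 1)) * (1 - q)⁻¹ := by
          rw [tsum_mul_left, tsum_geometric_of_lt_one hq0.le hq1]
  have hqs : Real.exp (-d * s * (1 - lam)) = q ^ s := by
    rw [hq, ← Real.exp_nat_mul]
    congr 1
    ring
  have part1 : (∑' j : {j : ℤ // (s : ℤ) < |j - i|}, c i (j : ℤ))
      ≤ E / (1 - q) * Real.exp (-d * s * (1 - lam)) * (c (i - 1) i + c i (i + 1)) := by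
    rw [hsymc, hqs]
    have heq : E / (1 - q) * q ^ s * (c i (i - 1) + c i (i + 1))
        = E * q ^ s * c i (i + 1) * (1 - q)⁻¹ + E * q ^ s * c i (i - 1) * (1 - q)⁻¹ := by
      rw [div_eq_mul_inv]; ring
    rw [heq]
    rw [hRsum, hLsum] at htail
    exact htail
  refine ⟨part1, ?_⟩
  by_cases hS : Summable (fun k : ℤ => c i k)
  · have hSge : c i (i - 1) + c i (i + 1) ≤ ∑' k : ℤ, c i k := by
      have hpair : c i (i - 1) + c i (i + 1) = ∑ k ∈ ({i - 1, i + 1} : Finset ℤ), c i k :=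
        (Finset.sum_pair (by omega)).symm
      rw [hpair]
      exact Summable.sum_le_tsum _ (fun k _ => hfnn k) hS
    have hpos : 0 < ∑' k : ℤ, c i k := lt_of_lt_of_le (by linarith) hSge
    rw [div_le_iff₀ hpos]
    calc (∑' j : {j : ℤ // (s : ℤ) < |j - i|}, c i (j : ℤ))
        ≤ E / (1 - q) * Real.exp (-d * s * (1 - lam)) * (c (i - 1) i + c i (i + 1)) := part1
      _ ≤ E / (1 - q) * Real.exp (-d * s * (1 - lam)) * (∑' k : ℤ, c i k) := by
          apply mul_le_mul_of_nonneg_left _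
            (le_of_lt (mul_pos (div_pos hE0 (by linarith)) (Real.exp_pos _)))
          rw [hsymc]; exact hSge
  · rw [tsum_eq_zero_of_not_summable hS, div_zero]
    exact le_of_lt (mul_pos (div_pos hE0 (by linarith)) (Real.exp_pos _))
end

section
/- Under the same setup (strictly increasing (x_k) with gaps ≥ d > 0, λ ∈ [0,1), conductances c_{i,j} = e^{λ(x_i+x_j) - |x_j-x_i| + u_{ij}}, u_min ≤ u_{ij} ≤ u_max), define for z ∈ ℤ the collapsed nearest-neighbor conductance c̄_{z,z+1} = ∑_{i ≤ z} ∑_{j ≥ z+1} c_{i,j} · (j - i). Then there is a constant K depending only on d, λ, u_max, u_min such that c̄_{z,z+1} ≤ K · c_{z,z+1} for all z ∈ ℤ. -/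
/-- The collapsed nearest-neighbour conductance
`c̄_{z,z+1} = ∑_{i≤z} ∑_{j≥z+1} c_{i,j}(j-i)` satisfies `c̄_{z,z+1} ≤ K c_{z,z+1}` for all `z`,
with `K` depending only on `d, λ, u_max, u_min`. -/
theorem stmt5 (d lam umin umax : ℝ) (hd : 0 < d) (hlam0 : 0 ≤ lam) (hlam1 : lam < 1) :
    ∃ K : ℝ, 0 < K ∧
      ∀ (x : ℤ → ℝ) (u : ℤ → ℤ → ℝ) (c : ℤ → ℤ → ℝ),
        StrictMono x → (∀ k : ℤ, d ≤ x (k + 1) - x k) →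
        (∀ i j : ℤ, u i j = u j i) →
        (∀ i j : ℤ, umin ≤ u i j ∧ u i j ≤ umax) →
        (∀ i j : ℤ, i ≠ j →
          c i j = Real.exp (lam * (x i + x j) - |x j - x i| + u i j)) →
        ∀ z : ℤ,
          (∑' p : ℕ × ℕ,
              c (z - p.1) (z + 1 + p.2) * (((z + 1 + (p.2 : ℤ)) - (z - (p.1 : ℤ))) : ℤ))
            ≤ K * c z (z + 1) := by
  set a : ℝ := (1 - lam) * d with ha_def
  have ha : 0 < a := mul_pos (by linarith) hd
  set r : ℝ := Real.exp (-a) with hr_def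
  have hr0 : 0 < r := Real.exp_pos _
  have hr1 : r < 1 := by
    rw [hr_def]
    have : (-a) < 0 := by linarith
    calc Real.exp (-a) < Real.exp 0 := Real.exp_lt_exp.mpr this
      _ = 1 := Real.exp_zero
  set g : ℕ → ℝ := fun k => ((k : ℝ) + 1) * r ^ k with hg_def
  have gnn : ∀ k, 0 ≤ g k := by
    intro k; positivity
  have hg : Summable g := by
    have h1 : Summable (fun k : ℕ => (k : ℝ) ^ 1 * r ^ k) :=
      summable_pow_mul_geometric_of_norm_lt_one 1 (by rwa [Real.norm_eq_abs, abs_of_pos hr0])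
    have h2 : Summable (fun k : ℕ => r ^ k) := summable_geometric_of_lt_one hr0.le hr1
    exact (h1.add h2).congr (fun k => by simp [hg_def]; ring)
  set S : ℝ := ∑' k, g k with hS_def
  have hS1 : 1 ≤ S := by
    have := Summable.le_tsum hg 0 (fun i _ => gnn i)
    simpa [hg_def] using this
  have hS0 : 0 < S := lt_of_lt_of_le one_pos hS1
  refine ⟨Real.exp (umax - umin) * (S * S), by positivity, ?_⟩
  intro x u c hmono hgap hsymm hu hc z
  -- gap lemma
  have gap : ∀ (k : ℤ) (n : ℕ), (n : ℝ) * d ≤ x (k + n) - x k := by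
    intro k n
    induction n with
    | zero => simp
    | succ n ih =>
      have h := hgap (k + n)
      have heq : (k + ((n : ℤ) + 1)) = (k + n) + 1 := by ring
      push_cast
      rw [heq]
      push_cast at ih
      linarith
  set C : ℝ := c z (z + 1) * Real.exp (umax - umin) with hC_def
  have hc0 : c z (z + 1) =
      Real.exp (lam * (x z + x (z + 1)) - (x (z + 1) - x z) + u z (z + 1)) := by
    rw [hc z (z + 1) (by omega)]
    congr 2
    rw [abs_of_nonneg]
    have := hmono (show z < z + 1 by omega)
    linarith
  have hbound : ∀ p : ℕ × ℕ,
      c (z - p.1) (z + 1 + p.2) * (((z + 1 + (p.2 : ℤ)) - (z - (p.1 : ℤ)) : ℤ) : ℝ)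
        ≤ C * (g p.1 * g p.2) := by
    rintro ⟨m, n⟩
    dsimp only
    set i : ℤ := z - m with hi_def
    set j : ℤ := z + 1 + n with hj_def
    have hij : i < j := by omega
    have hxij : x i ≤ x j := (hmono hij).le
    have hcij : c i j = Real.exp (lam * (x i + x j) - (x j - x i) + u i j) := by
      rw [hc i j hij.ne]
      congr 2
      rw [abs_of_nonneg (by linarith)]
    have hA : (m : ℝ) * d ≤ x z - x i := by
      have := gap i m
      have heq : i + (m : ℤ) = z := by omega
      rwa [heq] at this
    have hB : (n : ℝ) * d ≤ x j - x (z + 1) := gap (z + 1) n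
    -- exponent bound
    have h1 : a * (m : ℝ) ≤ (1 + lam) * (x z - x i) := by
      have hmd : 0 ≤ (m : ℝ) * d := by positivity
      have e1 : a * (m : ℝ) = (1 - lam) * ((m : ℝ) * d) := by rw [ha_def]; ring
      have e2 : (1 - lam) * ((m : ℝ) * d) ≤ (1 - lam) * (x z - x i) :=
        mul_le_mul_of_nonneg_left hA (by linarith)
      nlinarith
    have h2 : a * (n : ℝ) ≤ (1 - lam) * (x j - x (z + 1)) := by
      have e1 : a * (n : ℝ) = (1 - lam) * ((n : ℝ) * d) := by rw [ha_def]; ring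
      have e2 : (1 - lam) * ((n : ℝ) * d) ≤ (1 - lam) * (x j - x (z + 1)) :=
        mul_le_mul_of_nonneg_left hB (by linarith)
      linarith
    have hE : lam * (x i + x j) - (x j - x i) + u i j
        ≤ (lam * (x z + x (z + 1)) - (x (z + 1) - x z) + u z (z + 1))
          + (umax - umin) - a * (m : ℝ) - a * (n : ℝ) := by
      have hu1 := (hu i j).2
      have hu2 := (hu z (z + 1)).1
      nlinarith [h1, h2]
    have hexp : c i j ≤ Real.exp (lam * (x z + x (z + 1)) - (x (z + 1) - x z) + u z (z + 1))
        * Real.exp (umax - umin) * r ^ m * r ^ n := by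
      rw [hcij]
      have : Real.exp (lam * (x z + x (z + 1)) - (x (z + 1) - x z) + u z (z + 1))
          * Real.exp (umax - umin) * r ^ m * r ^ n
          = Real.exp ((lam * (x z + x (z + 1)) - (x (z + 1) - x z) + u z (z + 1))
            + (umax - umin) - a * (m : ℝ) - a * (n : ℝ)) := by
        rw [hr_def, ← Real.exp_nat_mul, ← Real.exp_nat_mul, ← Real.exp_add, ← Real.exp_add,
          ← Real.exp_add]
        congr 1
        ring
      rw [this]
      exact Real.exp_le_exp.mpr hE
    have hcast : (((z + 1 + (n : ℤ)) - (z - (m : ℤ)) : ℤ) : ℝ) = (m : ℝ) + (n : ℝ) + 1 := by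
      push_cast
      ring
    have hMN : (m : ℝ) + (n : ℝ) + 1 ≤ ((m : ℝ) + 1) * ((n : ℝ) + 1) := by
      have h0m : (0:ℝ) ≤ m := Nat.cast_nonneg m
      have h0n : (0:ℝ) ≤ n := Nat.cast_nonneg n
      nlinarith
    rw [hcast]
    calc c i j * ((m : ℝ) + (n : ℝ) + 1)
        ≤ (Real.exp (lam * (x z + x (z + 1)) - (x (z + 1) - x z) + u z (z + 1))
            * Real.exp (umax - umin) * r ^ m * r ^ n) * (((m : ℝ) + 1) * ((n : ℝ) + 1)) := by
          apply mul_le_mul hexp hMN (by positivity)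
          positivity
      _ = C * (g m * g n) := by
          rw [hC_def, hc0, hg_def]
          ring
  have hnn : ∀ p : ℕ × ℕ,
      0 ≤ c (z - p.1) (z + 1 + p.2) * (((z + 1 + (p.2 : ℤ)) - (z - (p.1 : ℤ)) : ℤ) : ℝ) := by
    rintro ⟨m, n⟩
    dsimp only
    rw [hc (z - m) (z + 1 + n) (by omega)]
    have : (((z + 1 + (n : ℤ)) - (z - (m : ℤ)) : ℤ) : ℝ) = (m : ℝ) + (n : ℝ) + 1 := by
      push_cast; ring
    rw [this]
    positivity
  have hprod : Summable (fun p : ℕ × ℕ => g p.1 * g p.2) :=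
    hg.mul_of_nonneg hg gnn gnn
  have hboundsum : Summable (fun p : ℕ × ℕ => C * (g p.1 * g p.2)) := hprod.mul_left C
  have hsum : Summable (fun p : ℕ × ℕ =>
      c (z - p.1) (z + 1 + p.2) * (((z + 1 + (p.2 : ℤ)) - (z - (p.1 : ℤ)) : ℤ) : ℝ)) :=
    Summable.of_nonneg_of_le hnn hbound hboundsum
  have hle := Summable.tsum_le_tsum hbound hsum hboundsum
  have hval : ∑' p : ℕ × ℕ, C * (g p.1 * g p.2) = C * (S * S) := by
    rw [tsum_mul_left]
    congr 1
    rw [Summable.tsum_prod' hprod (fun b => hg.mul_left (g b))]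
    simp_rw [tsum_mul_left]
    rw [tsum_mul_right]
  calc (∑' p : ℕ × ℕ,
        c (z - p.1) (z + 1 + p.2) * (((z + 1 + (p.2 : ℤ)) - (z - (p.1 : ℤ)) : ℤ) : ℝ))
      ≤ ∑' p : ℕ × ℕ, C * (g p.1 * g p.2) := hle
    _ = C * (S * S) := hval
    _ = Real.exp (umax - umin) * (S * S) * c z (z + 1) := by rw [hC_def]; ring
end

section
/- Let c : edges of ℤ with |i-j| ≤ ρ → (0,∞) be symmetric conductances and let c^1 denote their restriction to nearest-neighbor edges. Define for disjoint A, B ⊂ ℤ the effective conductance C^ρ_eff(A↔B) = inf { ∑_{i<j, |i-j|≤ρ} c_{i,j}(f(j)-f(i))² : f|_A = 0, f|_B = 1 }. Suppose there is a constant K such that ∑_{i≤z} ∑_{j≥z+1} c_{i,j}(j-i) ≤ K c_{z,z+1} for all z. Then C^1_eff(A↔B) ≤ C^ρ_eff(A↔B) ≤ K · C^1_eff(A↔B) for all disjoint A, B and all ρ ∈ ℕ ∪ {∞}. -/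
/-!
Restricting to fewer edges only drops nonnegative terms of the energy, which gives the first
inequality. For the second, Cauchy–Schwarz along the telescoping sum
`f j - f i = ∑_{i ≤ z < j} (f (z + 1) - f z)` bounds `c i j (f j - f i)²` by
`∑_{i ≤ z < j} c i j (j - i) (f (z + 1) - f z)²`. Summing over all edges and exchanging the sums,
the coefficient of `(f (z + 1) - f z)²` is `∑_{i ≤ z < j} c i j (j - i) ≤ K c z (z + 1)`, so the
energy of every `f` is at most `K` times its nearest-neighbour energy.
-/

open scoped ENNReal

/-- The Dirichlet effective conductance between `A` and `B` for the network on `ℤ` with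
conductances `c`, keeping only edges of length at most `ρ ∈ ℕ ∪ {∞}`. -/
noncomputable def effCond (c : ℤ → ℤ → ℝ) (ρ : ℕ∞) (A B : Set ℤ) : ℝ≥0∞ :=
  ⨅ (f : ℤ → ℝ) (_ : ∀ a ∈ A, f a = 0) (_ : ∀ b ∈ B, f b = 1),
    ∑' p : ℤ × ℤ,
      if p.1 < p.2 ∧ (((p.2 - p.1).natAbs : ℕ∞) ≤ ρ) then
        ENNReal.ofReal (c p.1 p.2 * (f p.2 - f p.1) ^ 2)
      else 0

open Finset

theorem sum_Ico_sub_int {M : Type*} [AddCommGroup M] (f : ℤ → M) {i j : ℤ} (hij : i ≤ j) :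
    ∑ z ∈ Ico i j, (f (z + 1) - f z) = f j - f i := by
  induction j, hij using Int.leInduction with
  | base => simp
  | succ n hn ih =>
    rw [← Order.succ_eq_add_one, ← insert_Ico_right_eq_Ico_succ hn, sum_insert right_notMem_Ico,
      ih, Order.succ_eq_add_one]
    abel

theorem sq_sub_le_mul_sum_Ico_sq (f : ℤ → ℝ) {i j : ℤ} (hij : i ≤ j) :
    (f j - f i) ^ 2 ≤ ((j - i : ℤ) : ℝ) * ∑ z ∈ Ico i j, (f (z + 1) - f z) ^ 2 := by
  have hcard : (#(Ico i j) : ℝ) = ((j - i : ℤ) : ℝ) := by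
    exact_mod_cast Int.card_Ico_of_le i j hij
  rw [← sum_Ico_sub_int f hij, ← hcard]
  exact sq_sum_le_card_mul_sum_sq

section Conductances

variable (c : ℤ → ℤ → ℝ)

noncomputable def dirichletEnergy (ρ : ℕ∞) (f : ℤ → ℝ) : ℝ≥0∞ :=
  ∑' p : ℤ × ℤ,
    if p.1 < p.2 ∧ (((p.2 - p.1).natAbs : ℕ∞) ≤ ρ) then
      ENNReal.ofReal (c p.1 p.2 * (f p.2 - f p.1) ^ 2)
    else 0

noncomputable def crossingWeight (z : ℤ) : ℝ≥0∞ :=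
  ∑' p : ℤ × ℤ, if p.1 ≤ z ∧ z < p.2 then ENNReal.ofReal (c p.1 p.2 * (p.2 - p.1 : ℤ)) else 0

theorem effCond_eq_iInf_dirichletEnergy (ρ : ℕ∞) (A B : Set ℤ) :
    effCond c ρ A B = ⨅ (f : ℤ → ℝ) (_ : ∀ a ∈ A, f a = 0) (_ : ∀ b ∈ B, f b = 1),
      dirichletEnergy c ρ f :=
  rfl

theorem dirichletEnergy_mono {ρ ρ' : ℕ∞} (h : ρ ≤ ρ') (f : ℤ → ℝ) :
    dirichletEnergy c ρ f ≤ dirichletEnergy c ρ' f := by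
  refine ENNReal.tsum_le_tsum fun p => ?_
  split_ifs with h₁ h₂
  exacts [le_rfl, absurd ⟨h₁.1, h₁.2.trans h⟩ h₂, zero_le, le_rfl]

theorem effCond_mono {ρ ρ' : ℕ∞} (h : ρ ≤ ρ') (A B : Set ℤ) :
    effCond c ρ A B ≤ effCond c ρ' A B :=
  iInf_mono fun f => iInf_mono fun _ => iInf_mono fun _ => dirichletEnergy_mono c h f

theorem dirichletEnergy_one_eq_tsum (f : ℤ → ℝ) :
    dirichletEnergy c 1 f = ∑' z : ℤ, ENNReal.ofReal (c z (z + 1) * (f (z + 1) - f z) ^ 2) := by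
  have hinj : Function.Injective fun z : ℤ => (z, z + 1) := fun a b h => (Prod.mk.inj h).1
  rw [dirichletEnergy, ← hinj.tsum_eq]
  · exact tsum_congr fun z => if_pos ⟨by omega, by simp⟩
  · rintro ⟨i, j⟩ hp
    have hij : i < j ∧ (((j - i).natAbs : ℕ∞) ≤ 1) := by
      by_contra h
      exact hp (if_neg h)
    have : (j - i).natAbs ≤ 1 := by exact_mod_cast hij.2
    exact ⟨i, Prod.ext rfl (by dsimp only; omega)⟩

theorem edge_energy_le (f : ℤ → ℝ) {i j : ℤ} (hij : i < j) (hc : 0 ≤ c i j) :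
    ENNReal.ofReal (c i j * (f j - f i) ^ 2) ≤
      ∑' z : ℤ, (if i ≤ z ∧ z < j then ENNReal.ofReal (c i j * (j - i : ℤ)) else 0) *
        ENNReal.ofReal ((f (z + 1) - f z) ^ 2) := by
  have hlen : (0 : ℝ) ≤ (j - i : ℤ) := by exact_mod_cast (by omega : (0 : ℤ) ≤ j - i)
  rw [tsum_eq_sum (s := Ico i j) fun z hz => by rw [if_neg (by simpa using hz), zero_mul]]
  calc ENNReal.ofReal (c i j * (f j - f i) ^ 2)
      ≤ ENNReal.ofReal (c i j * (j - i : ℤ) * ∑ z ∈ Ico i j, (f (z + 1) - f z) ^ 2) := by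
        rw [mul_assoc]
        exact ENNReal.ofReal_le_ofReal
          (mul_le_mul_of_nonneg_left (sq_sub_le_mul_sum_Ico_sq f hij.le) hc)
    _ = ∑ z ∈ Ico i j, (if i ≤ z ∧ z < j then ENNReal.ofReal (c i j * (j - i : ℤ)) else 0) *
          ENNReal.ofReal ((f (z + 1) - f z) ^ 2) := by
        rw [ENNReal.ofReal_mul (mul_nonneg hc hlen),
          ENNReal.ofReal_sum_of_nonneg fun z _ => sq_nonneg _, mul_sum]
        exact sum_congr rfl fun z hz => by rw [if_pos (by simpa using hz)]

theorem dirichletEnergy_top_le_tsum_crossingWeight_mul (hc : ∀ i j, i < j → 0 ≤ c i j)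
    (f : ℤ → ℝ) : dirichletEnergy c ⊤ f ≤
      ∑' z : ℤ, crossingWeight c z * ENNReal.ofReal ((f (z + 1) - f z) ^ 2) := by
  calc dirichletEnergy c ⊤ f
      ≤ ∑' p : ℤ × ℤ, ∑' z : ℤ, (if p.1 ≤ z ∧ z < p.2 then
          ENNReal.ofReal (c p.1 p.2 * (p.2 - p.1 : ℤ)) else 0) *
            ENNReal.ofReal ((f (z + 1) - f z) ^ 2) := by
        refine ENNReal.tsum_le_tsum fun p => ?_
        split_ifs with h
        · exact edge_energy_le c f h.1 (hc _ _ h.1)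
        · exact zero_le
    _ = ∑' z : ℤ, crossingWeight c z * ENNReal.ofReal ((f (z + 1) - f z) ^ 2) := by
        rw [ENNReal.tsum_comm]
        exact tsum_congr fun z => ENNReal.tsum_mul_right

theorem crossingWeight_eq_tsum_nat (z : ℤ) :
    crossingWeight c z = ∑' q : ℕ × ℕ, ENNReal.ofReal (c (z - q.1) (z + 1 + q.2) *
      (((z + 1 + (q.2 : ℤ)) - (z - (q.1 : ℤ))) : ℤ)) := by
  have hinj : Function.Injective fun q : ℕ × ℕ => (z - q.1, z + 1 + q.2) := by
    rintro ⟨a₁, a₂⟩ ⟨b₁, b₂⟩ h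
    simp only [Prod.mk.injEq] at h
    exact Prod.ext (by omega) (by omega)
  rw [crossingWeight, ← hinj.tsum_eq]
  · exact tsum_congr fun q => if_pos ⟨by omega, by omega⟩
  · rintro ⟨i, j⟩ hp
    have hij : i ≤ z ∧ z < j := by
      by_contra h
      exact hp (if_neg h)
    exact ⟨((z - i).toNat, (j - (z + 1)).toNat),
      Prod.ext (by dsimp only; omega) (by dsimp only; omega)⟩

theorem ofReal_le_crossingWeight (z : ℤ) : ENNReal.ofReal (c z (z + 1)) ≤ crossingWeight c z := by
  refine le_of_eq_of_le ?_ (ENNReal.le_tsum (z, z + 1))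
  rw [if_pos ⟨le_rfl, by omega⟩]
  simp

theorem crossingWeight_le {K : ℝ} (hc : ∀ i j, i < j → 0 ≤ c i j) (z : ℤ)
    (hsum : Summable fun q : ℕ × ℕ =>
      c (z - q.1) (z + 1 + q.2) * (((z + 1 + (q.2 : ℤ)) - (z - (q.1 : ℤ))) : ℤ))
    (hK : ∑' q : ℕ × ℕ,
      c (z - q.1) (z + 1 + q.2) * (((z + 1 + (q.2 : ℤ)) - (z - (q.1 : ℤ))) : ℤ) ≤ K * c z (z + 1)) :
    crossingWeight c z ≤ ENNReal.ofReal K * ENNReal.ofReal (c z (z + 1)) := by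
  have hnonneg (q : ℕ × ℕ) :
      0 ≤ c (z - q.1) (z + 1 + q.2) * (((z + 1 + (q.2 : ℤ)) - (z - (q.1 : ℤ))) : ℤ) :=
    mul_nonneg (hc _ _ (by omega)) (by exact_mod_cast (by omega : (0 : ℤ) ≤ _))
  rw [crossingWeight_eq_tsum_nat, ← ENNReal.ofReal_tsum_of_nonneg hnonneg hsum,
    ← ENNReal.ofReal_mul' (hc z (z + 1) (by omega))]
  exact ENNReal.ofReal_le_ofReal hK

theorem dirichletEnergy_le_mul_dirichletEnergy_one {k : ℝ≥0∞} (hc : ∀ i j, i < j → 0 ≤ c i j)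
    (hk : ∀ z, crossingWeight c z ≤ k * ENNReal.ofReal (c z (z + 1))) (ρ : ℕ∞) (f : ℤ → ℝ) :
    dirichletEnergy c ρ f ≤ k * dirichletEnergy c 1 f := by
  calc dirichletEnergy c ρ f
      ≤ dirichletEnergy c ⊤ f := dirichletEnergy_mono c le_top f
    _ ≤ ∑' z : ℤ, crossingWeight c z * ENNReal.ofReal ((f (z + 1) - f z) ^ 2) :=
        dirichletEnergy_top_le_tsum_crossingWeight_mul c hc f
    _ ≤ ∑' z : ℤ, k * ENNReal.ofReal (c z (z + 1)) * ENNReal.ofReal ((f (z + 1) - f z) ^ 2) :=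
        ENNReal.tsum_le_tsum fun z => mul_le_mul_left (hk z) _
    _ = k * dirichletEnergy c 1 f := by
        rw [dirichletEnergy_one_eq_tsum, ← ENNReal.tsum_mul_left]
        refine tsum_congr fun z => ?_
        rw [mul_assoc, ← ENNReal.ofReal_mul (hc z (z + 1) (by omega))]

theorem effCond_le_mul_effCond_one {k : ℝ≥0∞} (hk₀ : k ≠ 0) (hk_top : k ≠ ⊤)
    (hc : ∀ i j, i < j → 0 ≤ c i j)
    (hk : ∀ z, crossingWeight c z ≤ k * ENNReal.ofReal (c z (z + 1))) (ρ : ℕ∞) (A B : Set ℤ) :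
    effCond c ρ A B ≤ k * effCond c 1 A B := by
  simp only [effCond_eq_iInf_dirichletEnergy, ENNReal.mul_iInf_of_ne hk₀ hk_top]
  exact iInf_mono fun f => iInf_mono fun _ => iInf_mono fun _ =>
    dirichletEnergy_le_mul_dirichletEnergy_one c hc hk ρ f

end Conductances

theorem stmt6_general (c : ℤ → ℤ → ℝ) (K : ℝ)
    (hpos : ∀ i j : ℤ, i ≠ j → 0 < c i j)
    (hsummable : ∀ z : ℤ,
      Summable (fun p : ℕ × ℕ =>
        c (z - p.1) (z + 1 + p.2) * (((z + 1 + (p.2 : ℤ)) - (z - (p.1 : ℤ))) : ℤ)))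
    (hK : ∀ z : ℤ,
      (∑' p : ℕ × ℕ,
          c (z - p.1) (z + 1 + p.2) * (((z + 1 + (p.2 : ℤ)) - (z - (p.1 : ℤ))) : ℤ))
        ≤ K * c z (z + 1)) :
    ∀ (A B : Set ℤ), Disjoint A B → ∀ ρ : ℕ∞, 1 ≤ ρ →
      effCond c 1 A B ≤ effCond c ρ A B ∧
      effCond c ρ A B ≤ ENNReal.ofReal K * effCond c 1 A B := by
  intro A B _ ρ hρ
  have hc : ∀ i j, i < j → 0 ≤ c i j := fun i j h => (hpos i j h.ne).le
  have hw (z : ℤ) := crossingWeight_le c hc z (hsummable z) (hK z)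
  have hK₀ : ENNReal.ofReal K ≠ 0 := by
    intro h
    have h01 := (ofReal_le_crossingWeight c 0).trans (hw 0)
    rw [h, zero_mul, nonpos_iff_eq_zero, ENNReal.ofReal_eq_zero] at h01
    exact (hpos 0 1 (by norm_num)).not_ge h01
  exact ⟨effCond_mono c hρ A B,
    effCond_le_mul_effCond_one c hK₀ ENNReal.ofReal_ne_top hc hw ρ A B⟩

/-- If the symmetric positive conductances `c` satisfy
`∑_{i≤z} ∑_{j≥z+1} c_{i,j}(j-i) ≤ K c_{z,z+1}` for all `z`, then for all disjoint `A, B ⊆ ℤ`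
and all `ρ ∈ ℕ ∪ {∞}` with `ρ ≥ 1`:
`C¹_eff(A↔B) ≤ C^ρ_eff(A↔B) ≤ K · C¹_eff(A↔B)`. -/
theorem stmt6 (c : ℤ → ℤ → ℝ) (K : ℝ)
    (hsymm : ∀ i j : ℤ, c i j = c j i)
    (hpos : ∀ i j : ℤ, i ≠ j → 0 < c i j)
    (hsummable : ∀ z : ℤ,
      Summable (fun p : ℕ × ℕ =>
        c (z - p.1) (z + 1 + p.2) * (((z + 1 + (p.2 : ℤ)) - (z - (p.1 : ℤ))) : ℤ)))
    (hK : ∀ z : ℤ,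
      (∑' p : ℕ × ℕ,
          c (z - p.1) (z + 1 + p.2) * (((z + 1 + (p.2 : ℤ)) - (z - (p.1 : ℤ))) : ℤ))
        ≤ K * c z (z + 1)) :
    ∀ (A B : Set ℤ), Disjoint A B → ∀ ρ : ℕ∞, 1 ≤ ρ →
      effCond c 1 A B ≤ effCond c ρ A B ∧
      effCond c ρ A B ≤ ENNReal.ofReal K * effCond c 1 A B :=
  stmt6_general c K hpos hsummable hK
end

section
/- Let (Ω, F, P) be a probability space, λ ∈ (0,1), C ≥ 0, and let Z_0, Z_{-1} be nonnegative random variables with E[Z_{-1} | Z_0] ≤ C almost surely and E[e^{(1-λ)Z_0}] = ∞. Then E[e^{(1-λ)Z_0 - (1+λ)Z_{-1}}] = ∞. -/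
open MeasureTheory

/-! Conditional Markov inequality: on every `σ(Z₀)`-measurable event `A`,
`E[Z₋₁; A] = E[E[Z₋₁ | Z₀]; A] ≤ C P(A)`, so `Z₋₁ < 2C + 1` on at least half of `A`.
Hence the law of `Z₀` restricted to `{Z₋₁ < 2C + 1}` is at least half the law of `Z₀`, and
`E[e^{(1-λ)Z₀}; Z₋₁ < 2C + 1] = ∞`. On that event `e^{-(1+λ)Z₋₁} ≥ e^{-(1+λ)(2C+1)}`. -/

section ConditionalMarkov

variable {Ω : Type*} {m m0 : MeasurableSpace Ω} {μ : Measure Ω} {f : Ω → ℝ} {C : ℝ}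

theorem mul_measureReal_inter_le_of_condExp_le (hm : m ≤ m0) [SigmaFinite (μ.trim hm)]
    (hf : Integrable f μ) (hf0 : 0 ≤ᵐ[μ] f) (hcond : ∀ᵐ ω ∂μ, μ[f | m] ω ≤ C)
    {s : Set Ω} (hs : MeasurableSet[m] s) (hμs : μ s ≠ ⊤) (K : ℝ) :
    K * μ.real (s ∩ {ω | K ≤ f ω}) ≤ C * μ.real s :=
  calc K * μ.real (s ∩ {ω | K ≤ f ω})
      = K * (μ.restrict s).real {ω | K ≤ f ω} := by
        rw [measureReal_restrict_apply' (hm s hs), Set.inter_comm]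
    _ ≤ ∫ ω in s, f ω ∂μ :=
        mul_meas_ge_le_integral_of_nonneg (ae_restrict_of_ae hf0) hf.integrableOn K
    _ = ∫ ω in s, μ[f | m] ω ∂μ := (setIntegral_condExp hm hf hs).symm
    _ ≤ ∫ _ in s, C ∂μ := by
        refine setIntegral_mono_ae integrable_condExp.integrableOn ?_ hcond
        exact integrableOn_const hμs
    _ = C * μ.real s := by rw [setIntegral_const, smul_eq_mul, mul_comm]

theorem measure_le_two_mul_measure_inter_lt_of_condExp_le [IsFiniteMeasure μ] (hm : m ≤ m0)
    (hf : Integrable f μ) (hf0 : 0 ≤ᵐ[μ] f) (hC : 0 ≤ C) (hcond : ∀ᵐ ω ∂μ, μ[f | m] ω ≤ C)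
    {s : Set Ω} (hs : MeasurableSet[m] s) :
    μ s ≤ 2 * μ (s ∩ {ω | f ω < 2 * C + 1}) := by
  set t := s ∩ {ω | 2 * C + 1 ≤ f ω}
  have hmarkov : (2 * C + 1) * μ.real t ≤ C * μ.real s :=
    mul_measureReal_inter_le_of_condExp_le hm hf hf0 hcond hs (measure_ne_top μ s) _
  have hsplit : μ.real s ≤ μ.real (s ∩ {ω | f ω < 2 * C + 1}) + μ.real t := by
    refine (measureReal_mono fun ω hω => ?_).trans (measureReal_union_le _ _)
    rcases lt_or_ge (f ω) (2 * C + 1) with h | h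
    exacts [Or.inl ⟨hω, h⟩, Or.inr ⟨hω, h⟩]
  have ht : 2 * μ.real t ≤ μ.real s := by
    nlinarith [measureReal_nonneg (μ := μ) (s := t), measureReal_nonneg (μ := μ) (s := s)]
  rw [← ofReal_measureReal, ← ofReal_measureReal, ← ENNReal.ofReal_ofNat 2,
    ← ENNReal.ofReal_mul zero_le_two]
  exact ENNReal.ofReal_le_ofReal (by linarith)

variable {β : Type*} [MeasurableSpace β] {X : Ω → β}

theorem map_le_two_smul_map_restrict_of_condExp_le [IsFiniteMeasure μ] (hX : Measurable X)
    (hf : Integrable f μ) (hf0 : 0 ≤ᵐ[μ] f) (hC : 0 ≤ C)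
    (hcond : ∀ᵐ ω ∂μ, μ[f | MeasurableSpace.comap X ‹_›] ω ≤ C) :
    μ.map X ≤ (2 : ENNReal) • (μ.restrict {ω | f ω < 2 * C + 1}).map X := by
  refine Measure.le_iff.2 fun S hS => ?_
  rw [Measure.smul_apply, Measure.map_apply hX hS, Measure.map_apply hX hS,
    Measure.restrict_apply (hX hS), smul_eq_mul]
  exact measure_le_two_mul_measure_inter_lt_of_condExp_le hX.comap_le hf hf0 hC hcond ⟨S, hS, rfl⟩

theorem setLIntegral_comp_eq_top_of_condExp_le [IsFiniteMeasure μ] (hX : Measurable X)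
    (hf : Integrable f μ) (hf0 : 0 ≤ᵐ[μ] f) (hC : 0 ≤ C)
    (hcond : ∀ᵐ ω ∂μ, μ[f | MeasurableSpace.comap X ‹_›] ω ≤ C)
    {g : β → ENNReal} (hg : Measurable g) (htop : ∫⁻ ω, g (X ω) ∂μ = ⊤) :
    ∫⁻ ω in {ω | f ω < 2 * C + 1}, g (X ω) ∂μ = ⊤ := by
  have : ⊤ ≤ 2 * ∫⁻ ω in {ω | f ω < 2 * C + 1}, g (X ω) ∂μ :=
    calc ⊤ = ∫⁻ y, g y ∂μ.map X := by rw [lintegral_map hg hX, htop]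
      _ ≤ ∫⁻ y, g y ∂((2 : ENNReal) • (μ.restrict {ω | f ω < 2 * C + 1}).map X) :=
          lintegral_mono' (map_le_two_smul_map_restrict_of_condExp_le hX hf hf0 hC hcond) le_rfl
      _ = 2 * ∫⁻ ω in {ω | f ω < 2 * C + 1}, g (X ω) ∂μ := by
          rw [lintegral_smul_measure, lintegral_map hg hX, smul_eq_mul]
  simpa [ENNReal.mul_eq_top] using top_le_iff.1 this

end ConditionalMarkov

theorem stmt10_general {Ω : Type*} [m0 : MeasurableSpace Ω] (μ : Measure Ω) [IsProbabilityMeasure μ]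
    (lam C : ℝ) (hlam0 : 0 < lam) (hC : 0 ≤ C)
    (Z₀ Zm₁ : Ω → ℝ) (hZ₀ : Measurable Z₀) (hZm₁ : Measurable Zm₁)
    (hZm₁pos : ∀ ω, 0 ≤ Zm₁ ω)
    (hint : Integrable Zm₁ μ)
    (hcond : ∀ᵐ ω ∂μ, (μ[Zm₁ | MeasurableSpace.comap Z₀ Real.measurableSpace]) ω ≤ C)
    (hdiv : ∫⁻ ω, ENNReal.ofReal (Real.exp ((1 - lam) * Z₀ ω)) ∂μ = ⊤) :
    ∫⁻ ω, ENNReal.ofReal (Real.exp ((1 - lam) * Z₀ ω - (1 + lam) * Zm₁ ω)) ∂μ = ⊤ := by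
  set B := {ω | Zm₁ ω < 2 * C + 1}
  have hB : ∫⁻ ω in B, ENNReal.ofReal (Real.exp ((1 - lam) * Z₀ ω)) ∂μ = ⊤ :=
    setLIntegral_comp_eq_top_of_condExp_le hZ₀ hint (ae_of_all _ hZm₁pos) hC hcond
      (g := fun x => ENNReal.ofReal (Real.exp ((1 - lam) * x))) (by fun_prop) hdiv
  refine top_le_iff.1 ?_
  calc ⊤ = ENNReal.ofReal (Real.exp (-((1 + lam) * (2 * C + 1)))) *
        ∫⁻ ω in B, ENNReal.ofReal (Real.exp ((1 - lam) * Z₀ ω)) ∂μ := by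
        rw [hB, ENNReal.mul_top (by positivity)]
    _ = ∫⁻ ω in B, ENNReal.ofReal (Real.exp ((1 - lam) * Z₀ ω - (1 + lam) * (2 * C + 1))) ∂μ := by
        rw [← lintegral_const_mul' _ _ ENNReal.ofReal_ne_top]
        simp only [← ENNReal.ofReal_mul (Real.exp_nonneg _), ← Real.exp_add, neg_add_eq_sub]
    _ ≤ ∫⁻ ω in B, ENNReal.ofReal (Real.exp ((1 - lam) * Z₀ ω - (1 + lam) * Zm₁ ω)) ∂μ := by
        refine setLIntegral_mono' (measurableSet_lt hZm₁ measurable_const) fun ω hω => ?_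
        gcongr
        exact hω.le
    _ ≤ _ := setLIntegral_le_lintegral _ _

/-- If `Z₀, Z₋₁ ≥ 0`, `E[Z₋₁ | Z₀] ≤ C` a.s. and `E[e^{(1-λ)Z₀}] = ∞`, then
`E[e^{(1-λ)Z₀ - (1+λ)Z₋₁}] = ∞`. -/
theorem stmt10 {Ω : Type*} [m0 : MeasurableSpace Ω] (μ : Measure Ω) [IsProbabilityMeasure μ]
    (lam C : ℝ) (hlam0 : 0 < lam) (hlam1 : lam < 1) (hC : 0 ≤ C)
    (Z₀ Zm₁ : Ω → ℝ) (hZ₀ : Measurable Z₀) (hZm₁ : Measurable Zm₁)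
    (hZ₀pos : ∀ ω, 0 ≤ Z₀ ω) (hZm₁pos : ∀ ω, 0 ≤ Zm₁ ω)
    (hint : Integrable Zm₁ μ)
    (hcond : ∀ᵐ ω ∂μ, (μ[Zm₁ | MeasurableSpace.comap Z₀ Real.measurableSpace]) ω ≤ C)
    (hdiv : ∫⁻ ω, ENNReal.ofReal (Real.exp ((1 - lam) * Z₀ ω)) ∂μ = ⊤) :
    ∫⁻ ω, ENNReal.ofReal (Real.exp ((1 - lam) * Z₀ ω - (1 + lam) * Zm₁ ω)) ∂μ = ⊤ :=
  stmt10_general (m0 := m0) μ lam C hlam0 hC Z₀ Zm₁ hZ₀ hZm₁ hZm₁pos hint hcond hdiv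
end

section
/- Let Ω = ℝ^ℤ with a shift-invariant probability measure μ that is ergodic for the shift τ₁. Let Ξ = ℕ₊^ℕ and let P make the coordinates η_i i.i.d. with finite expectation, and suppose gcd{ k : P(η₁ = k) > 0 } = 1. Define T : Ω × Ξ → Ω × Ξ by T(ω, η) = (τ_{η₁}ω, shift of η). Then T is ergodic (and measure-preserving) with respect to μ ⊗ P. -/
/-!
For a `T`-invariant set `s`, the section measure `H ω = P {η | (ω, η) ∈ s}` is harmonic for the
random walk `ω ↦ τ_k ω`, `k ∼ ν`: conditioning on the first step gives
`H ω = ∫ H (τ_k ω) dν(k)`. Since every `τ_k` preserves `μ`, expanding `∫∫ (H ∘ τ_k - H)²` shows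
that `H ∘ τ_k = H` a.e. for every `k` charged by `ν`. These `k` generate `ℤ` by the gcd condition,
so `H` is `τ₁`-invariant and hence a.e. equal to a constant `c` by ergodicity of `μ`.
Invariance of `s` under `T^n` together with the independence of the first `n` steps from the
later ones then gives `(μ ⊗ P)(s ∩ A × B) = c · (μ ⊗ P)(A × B)` whenever `B` only depends on the
first `n` coordinates, so `s` is independent of itself and has measure `0` or `1`.
-/

open MeasureTheory ProbabilityTheory Set Filter MeasurableSpace
open scoped ENNReal NNReal

lemma ENNReal.tsub_sq_add_tsub_sq_add_two_mul {a b : ℝ≥0∞} (ha : a ≠ ∞) (hb : b ≠ ∞) :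
    (a - b) ^ 2 + (b - a) ^ 2 + 2 * (a * b) = a ^ 2 + b ^ 2 := by
  wlog hab : a ≤ b generalizing a b
  · have := this hb ha (le_of_not_ge hab)
    rw [add_comm ((a - b) ^ 2), mul_comm a, this, add_comm]
  obtain ⟨d, rfl⟩ := exists_add_of_le hab
  rw [tsub_eq_zero_of_le hab, ENNReal.add_sub_cancel_left ha]
  ring

namespace RandomShift

section Shift

variable {α : Type*}

def shift (z : ℤ) (ω : ℤ → α) : ℤ → α := fun k => ω (k + z)

lemma shift_shift (a b : ℤ) (ω : ℤ → α) : shift a (shift b ω) = shift (a + b) ω := by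
  funext k; simp only [shift, add_assoc]

@[simp] lemma shift_zero : shift 0 = (id : (ℤ → α) → ℤ → α) := by
  funext ω k; simp [shift]

variable [MeasurableSpace α]

lemma measurable_shift (z : ℤ) : Measurable (shift z : (ℤ → α) → ℤ → α) :=
  measurable_pi_lambda _ fun _ => measurable_pi_apply _

lemma measurable_shift_apply {γ : Type*} [MeasurableSpace γ] {f : γ → ℤ} {g : γ → ℤ → α}
    (hf : Measurable f) (hg : Measurable g) : Measurable fun c => shift (f c) (g c) :=
  have huncurry : Measurable fun p : (ℤ → α) × ℤ => shift p.2 p.1 :=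
    measurable_from_prod_countable_left measurable_shift
  huncurry.comp (hg.prodMk hf)

def shiftEquiv (z : ℤ) : (ℤ → α) ≃ᵐ (ℤ → α) where
  toFun := shift z
  invFun := shift (-z)
  left_inv ω := by simp [shift_shift]
  right_inv ω := by simp [shift_shift]
  measurable_toFun := measurable_shift z
  measurable_invFun := measurable_shift (-z)

variable {μ : Measure (ℤ → α)}

lemma measurePreserving_shift (h1 : MeasurePreserving (shift 1) μ μ) (z : ℤ) :
    MeasurePreserving (shift z) μ μ := by
  have hnat (n : ℕ) : MeasurePreserving (shift (n : ℤ)) μ μ := by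
    have : shift (n : ℤ) = (shift 1 : (ℤ → α) → ℤ → α)^[n] := by
      induction n with
      | zero => simp
      | succ n ih =>
        rw [Function.iterate_succ', ← ih]; funext ω; simp [shift_shift, add_comm]
    exact this ▸ h1.iterate n
  obtain ⟨n, rfl | rfl⟩ := z.eq_nat_or_neg
  · exact hnat n
  · exact (hnat n).symm (shiftEquiv (n : ℤ))

lemma comp_shift_ae_eq_of_mem_closure {β : Type*} (h1 : MeasurePreserving (shift 1) μ μ)
    {h : (ℤ → α) → β} {S : Set ℤ} (hS : ∀ z ∈ S, h ∘ shift z =ᵐ[μ] h) {z : ℤ}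
    (hz : z ∈ AddSubgroup.closure S) : h ∘ shift z =ᵐ[μ] h := by
  have hpull (a : ℤ) {f g : (ℤ → α) → β} (hfg : f =ᵐ[μ] g) : f ∘ shift a =ᵐ[μ] g ∘ shift a :=
    hfg.comp_tendsto (measurePreserving_shift h1 a).quasiMeasurePreserving.tendsto_ae
  induction hz using AddSubgroup.closure_induction with
  | mem z hz => exact hS z hz
  | zero => simp
  | add a b _ _ ha hb =>
    have : h ∘ shift (a + b) = h ∘ shift a ∘ shift b := by
      funext ω; simp [shift_shift]
    rw [this]
    exact (hpull b ha).trans hb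
  | neg a _ ha =>
    have : h = h ∘ shift a ∘ shift (-a) := by
      funext ω; simp [shift_shift]
    conv_rhs => rw [this]
    exact (hpull (-a) ha).symm

end Shift

lemma one_mem_closure_of_gcd_eq_one {S : Set ℕ} (hS : ∀ m : ℕ, (∀ k ∈ S, m ∣ k) → m = 1) :
    (1 : ℤ) ∈ AddSubgroup.closure (((↑) : ℕ → ℤ) '' S) := by
  obtain ⟨a, ha⟩ := Int.subgroup_cyclic (AddSubgroup.closure (((↑) : ℕ → ℤ) '' S))
  have hdvd (k : ℕ) (hk : k ∈ S) : a.natAbs ∣ k := by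
    have hmem : (k : ℤ) ∈ AddSubgroup.closure {a} :=
      ha ▸ AddSubgroup.subset_closure (mem_image_of_mem _ hk)
    rw [AddSubgroup.mem_closure_singleton] at hmem
    obtain ⟨n, hn⟩ := hmem
    have : a ∣ (k : ℤ) := Dvd.intro_left n (by rw [← hn, smul_eq_mul])
    simpa using Int.natAbs_dvd_natAbs.2 this
  rw [ha, AddSubgroup.mem_closure_singleton]
  rcases Int.natAbs_eq_iff.1 (hS _ hdvd) with h | h <;> rw [h]
  · exact ⟨1, by simp⟩
  · exact ⟨-1, by simp⟩

section Sequence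

variable {β : Type*}

def tail (η : ℕ → β) : ℕ → β := fun n => η (n + 1)

def initSeg (n : ℕ) (η : ℕ → β) : Fin n → β := fun i => η i

lemma iterate_tail_apply (n m : ℕ) (η : ℕ → β) : tail^[n] η m = η (m + n) := by
  induction n generalizing η with
  | zero => rfl
  | succ n ih => rw [Function.iterate_succ_apply, ih]; simp only [tail, add_assoc]

lemma initSeg_preimage_eq_of_le {n m : ℕ} (hnm : n ≤ m) (S : Set (Fin n → β)) :
    initSeg n ⁻¹' S = initSeg m ⁻¹' ((fun x i => x (Fin.castLE hnm i)) ⁻¹' S) :=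
  rfl

variable [MeasurableSpace β]

lemma measurable_tail : Measurable (tail : (ℕ → β) → ℕ → β) :=
  measurable_pi_lambda _ fun _ => measurable_pi_apply _

lemma measurable_initSeg (n : ℕ) : Measurable (initSeg n : (ℕ → β) → Fin n → β) :=
  measurable_pi_lambda _ fun _ => measurable_pi_apply _

variable (β) in
def cylinders : Set (Set (ℕ → β)) :=
  {B | ∃ (n : ℕ) (S : Set (Fin n → β)), MeasurableSet S ∧ B = initSeg n ⁻¹' S}

lemma isPiSystem_cylinders : IsPiSystem (cylinders β) := by
  rintro _ ⟨n, S, hS, rfl⟩ _ ⟨m, T, hT, rfl⟩ -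
  have hcast {k : ℕ} (hk : k ≤ max n m) :
      Measurable fun (x : Fin (max n m) → β) (i : Fin k) => x (Fin.castLE hk i) :=
    measurable_pi_lambda _ fun _ => measurable_pi_apply _
  refine ⟨max n m, _, (hcast le_sup_left hS).inter (hcast le_sup_right hT), ?_⟩
  rw [initSeg_preimage_eq_of_le le_sup_left S, initSeg_preimage_eq_of_le le_sup_right T,
    preimage_inter]

lemma generateFrom_cylinders : generateFrom (cylinders β) = MeasurableSpace.pi := by
  refine le_antisymm (generateFrom_le ?_) (iSup_le fun i => ?_)
  · rintro _ ⟨n, S, hS, rfl⟩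
    exact measurable_initSeg n hS
  · rintro _ ⟨A, hA, rfl⟩
    exact measurableSet_generateFrom
      ⟨i + 1, {x | x (Fin.last i) ∈ A}, measurable_pi_apply _ hA, rfl⟩

lemma isCountablySpanning_cylinders : IsCountablySpanning (cylinders β) :=
  ⟨fun _ => univ, fun _ => ⟨0, univ, MeasurableSet.univ, rfl⟩, iUnion_const _⟩

variable {P : Measure (ℕ → β)} {ν : Measure β}

lemma map_tail_of_iIndepFun [IsProbabilityMeasure ν]
    (hiid : iIndepFun (fun i (η : ℕ → β) => η i) P) (hlaw : ∀ i, P.map (fun η => η i) = ν) :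
    P.map tail = P := by
  have hP : P = Measure.infinitePi fun _ => ν := by
    simpa [hlaw] using hiid.map_fun_eq_infinitePi_map (fun i => measurable_pi_apply i)
  rw [hP]
  exact Measure.map_infinitePi_infinitePi_of_inj (add_left_injective 1)

lemma indepFun_initSeg_iterate_tail (hiid : iIndepFun (fun i (η : ℕ → β) => η i) P) (n : ℕ) :
    IndepFun (initSeg n) (tail^[n]) P := by
  let m (i : ℕ) : MeasurableSpace (ℕ → β) := MeasurableSpace.comap (fun η => η i) ‹_›
  have hcomap {ι : Type} (e : ι → ℕ) {I : Set ℕ} (he : ∀ j, e j ∈ I) :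
      MeasurableSpace.comap (fun η (j : ι) => η (e j)) MeasurableSpace.pi ≤ ⨆ i ∈ I, m i := by
    simp only [MeasurableSpace.pi, MeasurableSpace.comap_iSup, MeasurableSpace.comap_comp]
    exact iSup_le fun j => le_biSup m (he j)
  have htail : tail^[n] = fun (η : ℕ → β) j => η (j + n) :=
    funext fun η => funext fun j => iterate_tail_apply n j η
  rw [IndepFun_iff_Indep, htail]
  exact indep_of_indep_of_le_right (indep_of_indep_of_le_left
    (indep_iSup_of_disjoint (fun i => (measurable_pi_apply i).comap_le) hiid.iIndep
      (disjoint_compl_right (a := Iio n))) (hcomap Fin.val fun i => mem_Iio.2 i.isLt))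
    (hcomap (· + n) fun j => by simp)

lemma map_initSeg_iterate_tail [IsProbabilityMeasure P] [IsProbabilityMeasure ν]
    (hiid : iIndepFun (fun i (η : ℕ → β) => η i) P) (hlaw : ∀ i, P.map (fun η => η i) = ν)
    (n : ℕ) :
    P.map (fun η => (initSeg n η, tail^[n] η)) = (P.map (initSeg n)).prod P := by
  have htail : P.map (tail^[n]) = P := by
    induction n with
    | zero => simp
    | succ n ih =>
      rw [Function.iterate_succ, ← Measure.map_map (measurable_tail.iterate n) measurable_tail,
        map_tail_of_iIndepFun hiid hlaw, ih]
  rw [(indepFun_initSeg_iterate_tail hiid n).map_prod_eq_prod_map_map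
    (measurable_initSeg n).aemeasurable (measurable_tail.iterate n).aemeasurable, htail]

end Sequence

lemma ae_ae_comp_eq_of_lintegral_comp_eq {X ι : Type*} [MeasurableSpace X] [MeasurableSpace ι]
    {μ : Measure X} [IsProbabilityMeasure μ] {ν : Measure ι} [IsProbabilityMeasure ν]
    {g : ι → X → X} {h : X → ℝ≥0∞} {C : ℝ≥0} (hg : ∀ k, MeasurePreserving (g k) μ μ)
    (hgm : Measurable (Function.uncurry g)) (hm : Measurable h) (hC : ∀ x, h x ≤ C)
    (hharm : ∀ᵐ x ∂μ, ∫⁻ k, h (g k x) ∂ν = h x) :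
    ∀ᵐ k ∂ν, h ∘ g k =ᵐ[μ] h := by
  let a (p : ι × X) : ℝ≥0∞ := h (g p.1 p.2)
  let b (p : ι × X) : ℝ≥0∞ := h p.2
  have ha : Measurable a := hm.comp hgm
  have hb : Measurable b := hm.comp measurable_snd
  have hab_m : Measurable fun p => a p * b p := ha.mul hb
  have hfin (x : X) : h x ≠ ∞ := ne_top_of_le_ne_top ENNReal.coe_ne_top (hC x)
  have hI : ∫⁻ x, h x ^ 2 ∂μ ≠ ∞ := by
    refine ne_top_of_le_ne_top ?_ (lintegral_mono fun x => pow_le_pow_left' (hC x) 2)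
    simp
  -- `∫∫ a²`, `∫∫ b²` and `∫∫ a b` all equal `∫ h²`, so `∫∫ ((a - b)² + (b - a)²) = 0`.
  have haa : ∫⁻ p, a p ^ 2 ∂(ν.prod μ) = ∫⁻ x, h x ^ 2 ∂μ := by
    rw [lintegral_prod _ (ha.pow_const 2).aemeasurable]
    simp [a, (hg _).lintegral_comp (hm.pow_const 2)]
  have hbb : ∫⁻ p, b p ^ 2 ∂(ν.prod μ) = ∫⁻ x, h x ^ 2 ∂μ := by
    rw [lintegral_prod _ (hb.pow_const 2).aemeasurable]
    simp [b]
  have hab : ∫⁻ p, a p * b p ∂(ν.prod μ) = ∫⁻ x, h x ^ 2 ∂μ := by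
    rw [lintegral_prod_symm _ hab_m.aemeasurable]
    refine lintegral_congr_ae ?_
    filter_upwards [hharm] with x hx
    have hmk : Measurable fun k => h (g k x) := hm.comp (hgm.comp measurable_prodMk_right)
    show ∫⁻ k, h (g k x) * h x ∂ν = h x ^ 2
    rw [lintegral_mul_const _ hmk, hx, sq]
  have hD : ∫⁻ p, (a p - b p) ^ 2 + (b p - a p) ^ 2 ∂(ν.prod μ) = 0 := by
    have h2 : ∫⁻ p, (a p - b p) ^ 2 + (b p - a p) ^ 2 + 2 * (a p * b p) ∂(ν.prod μ)
        = ∫⁻ p, a p ^ 2 + b p ^ 2 ∂(ν.prod μ) :=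
      lintegral_congr fun p => ENNReal.tsub_sq_add_tsub_sq_add_two_mul (hfin _) (hfin _)
    rw [lintegral_add_right _ (hab_m.const_mul 2), lintegral_const_mul _ hab_m,
      lintegral_add_right _ (hb.pow_const 2), haa, hbb, hab, ← two_mul] at h2
    exact (ENNReal.add_left_inj (by finiteness)).1 (h2.trans (zero_add _).symm)
  have hzero := (lintegral_eq_zero_iff (by fun_prop)).1 hD
  filter_upwards [Measure.ae_ae_of_ae_prod hzero] with k hk
  filter_upwards [hk] with x hx
  simp only [Pi.zero_apply, add_eq_zero, pow_eq_zero_iff two_ne_zero, tsub_eq_zero_iff_le] at hx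
  exact le_antisymm hx.1 hx.2

lemma measure_eq_zero_or_one_of_measure_inter_eq_mul {Ω : Type*} [m : MeasurableSpace Ω]
    {μ : Measure Ω} [IsProbabilityMeasure μ] {C : Set (Set Ω)} (hC : IsPiSystem C)
    (hgen : generateFrom C = m) {s : Set Ω} (hs : MeasurableSet s)
    (h : ∀ t ∈ C, μ (s ∩ t) = μ s * μ t) : μ s = 0 ∨ μ s = 1 := by
  have hsm : generateFrom {s} ≤ m := generateFrom_le fun t ht => (mem_singleton_iff.1 ht) ▸ hs
  have hindep : Indep (generateFrom {s}) m μ :=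
    IndepSets.indep hsm le_rfl (IsPiSystem.singleton s) hC rfl hgen.symm <|
      (IndepSets_iff _ _ _).2 fun _ t hs ht => (mem_singleton_iff.1 hs) ▸ h t ht
  exact measure_eq_zero_or_one_of_indepSet_self (indep_of_indep_of_le_right hindep hsm)

section Skew

variable {α : Type*}

def skew (p : (ℤ → α) × (ℕ → ℕ)) : (ℤ → α) × (ℕ → ℕ) := (shift (p.2 0) p.1, tail p.2)

lemma iterate_skew (n : ℕ) (p : (ℤ → α) × (ℕ → ℕ)) :
    skew^[n] p = (shift (∑ i : Fin n, (p.2 i : ℤ)) p.1, tail^[n] p.2) := by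
  induction n generalizing p with
  | zero => simp
  | succ n ih =>
    rw [Function.iterate_succ_apply, ih, Function.iterate_succ_apply, Fin.sum_univ_succ]
    simp [skew, tail, shift_shift, add_comm]

variable [MeasurableSpace α] {μ : Measure (ℤ → α)} [IsProbabilityMeasure μ]
  {P : Measure (ℕ → ℕ)} [IsProbabilityMeasure P]

lemma measurePreserving_skew (h1 : MeasurePreserving (shift 1) μ μ) (htail : P.map tail = P) :
    MeasurePreserving skew (μ.prod P) (μ.prod P) := by
  have hswapped : MeasurePreserving (fun q : (ℕ → ℕ) × (ℤ → α) => (tail q.1, shift (q.1 0) q.2))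
      (P.prod μ) (P.prod μ) :=
    MeasurePreserving.skew_product (g := fun η => shift (η 0 : ℤ)) ⟨measurable_tail, htail⟩
      (measurable_shift_apply
        (measurable_from_nat.comp ((measurable_pi_apply 0).comp measurable_fst)) measurable_snd)
      (ae_of_all _ fun η => (measurePreserving_shift h1 _).map_eq)
  exact Measure.measurePreserving_swap.comp (hswapped.comp Measure.measurePreserving_swap)

variable {s : Set ((ℤ → α) × (ℕ → ℕ))}

lemma measure_initSeg_preimage_inter_section (hs : MeasurableSet s) (hinv : skew ⁻¹' s = s)
    {n : ℕ} (hsplit : P.map (fun η => (initSeg n η, tail^[n] η)) = (P.map (initSeg n)).prod P)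
    (S : Set (Fin n → ℕ)) (ω : ℤ → α) :
    P (initSeg n ⁻¹' S ∩ Prod.mk ω ⁻¹' s)
      = ∫⁻ η in initSeg n ⁻¹' S, P (Prod.mk (shift (∑ i : Fin n, (η i : ℤ)) ω) ⁻¹' s) ∂P := by
  let F (x : Fin n → ℕ) : ℝ≥0∞ := P (Prod.mk (shift (∑ i, (x i : ℤ)) ω) ⁻¹' s)
  let W : Set ((Fin n → ℕ) × (ℕ → ℕ)) :=
    Prod.fst ⁻¹' S ∩ (fun q => (shift (∑ i, (q.1 i : ℤ)) ω, q.2)) ⁻¹' s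
  have hW : MeasurableSet W :=
    (measurable_fst MeasurableSet.of_discrete).inter
      ((((measurable_of_countable fun x : Fin n → ℕ => shift (∑ i, (x i : ℤ)) ω).comp
        measurable_fst).prodMk measurable_snd) hs)
  have hpre : initSeg n ⁻¹' S ∩ Prod.mk ω ⁻¹' s
      = (fun η => (initSeg n η, tail^[n] η)) ⁻¹' W := by
    ext η
    have hiter : skew^[n] ⁻¹' s = s := Function.IsFixedPt.preimage_iterate hinv n
    rw [← hiter]
    simp [W, iterate_skew, initSeg]
  have hsection (x : Fin n → ℕ) : P (Prod.mk x ⁻¹' W) = S.indicator F x := by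
    by_cases hx : x ∈ S
    · rw [indicator_of_mem hx]
      congr 1; ext ξ; simp [W, hx]
    · rw [indicator_of_notMem hx, ← measure_empty (μ := P)]
      congr 1; ext ξ; simp [W, hx]
  rw [hpre, ← Measure.map_apply ((measurable_initSeg n).prodMk (measurable_tail.iterate n)) hW,
    hsplit, Measure.prod_apply hW,
    lintegral_map (measurable_measure_prodMk_left hW) (measurable_initSeg n),
    ← lintegral_indicator (measurable_initSeg n MeasurableSet.of_discrete)]
  exact lintegral_congr fun η => by rw [hsection, ← indicator_comp_right]; rfl

lemma section_measure_eq_lintegral (hs : MeasurableSet s) (hinv : skew ⁻¹' s = s)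
    {ν : Measure ℕ} [IsProbabilityMeasure ν] (hiid : iIndepFun (fun i (η : ℕ → ℕ) => η i) P)
    (hlaw : ∀ i, P.map (fun η => η i) = ν) (ω : ℤ → α) :
    P (Prod.mk ω ⁻¹' s) = ∫⁻ k, P (Prod.mk (shift (k : ℤ) ω) ⁻¹' s) ∂ν := by
  have h := measure_initSeg_preimage_inter_section hs hinv
    (map_initSeg_iterate_tail hiid hlaw 1) univ ω
  simp only [preimage_univ, univ_inter, Measure.restrict_univ, Fin.sum_univ_one] at h
  rw [h, ← hlaw 0, lintegral_map (measurable_of_countable _) (measurable_pi_apply 0)]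
  rfl

lemma section_measure_ae_eq_const (hshift : Ergodic (shift 1) μ) (hs : MeasurableSet s)
    (hinv : skew ⁻¹' s = s) {ν : Measure ℕ} [IsProbabilityMeasure ν]
    (hiid : iIndepFun (fun i (η : ℕ → ℕ) => η i) P) (hlaw : ∀ i, P.map (fun η => η i) = ν)
    (hgcd : ∀ m : ℕ, (∀ k : ℕ, ν {k} ≠ 0 → m ∣ k) → m = 1) :
    ∃ c, (fun ω => P (Prod.mk ω ⁻¹' s)) =ᵐ[μ] fun _ => c := by
  set H : (ℤ → α) → ℝ≥0∞ := fun ω => P (Prod.mk ω ⁻¹' s)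
  have hHm : Measurable H := measurable_measure_prodMk_left hs
  have hmp (k : ℕ) := measurePreserving_shift hshift.toMeasurePreserving (k : ℤ)
  have hae : ∀ᵐ (k : ℕ) ∂ν, H ∘ shift (k : ℤ) =ᵐ[μ] H :=
    ae_ae_comp_eq_of_lintegral_comp_eq (g := fun k : ℕ => shift (k : ℤ)) hmp
      (measurable_shift_apply (measurable_from_nat.comp measurable_fst) measurable_snd) hHm
      (C := 1) (fun _ => by simpa using prob_le_one)
      (ae_of_all _ fun ω => (section_measure_eq_lintegral hs hinv hiid hlaw ω).symm)
  have hone : H ∘ shift 1 =ᵐ[μ] H :=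
    comp_shift_ae_eq_of_mem_closure hshift.toMeasurePreserving
      (by rintro _ ⟨k, hk, rfl⟩; exact ae_iff_of_countable.1 hae k hk)
      (one_mem_closure_of_gcd_eq_one hgcd)
  exact hshift.ae_eq_const_of_ae_eq_comp₀ hHm.nullMeasurable hone

lemma measure_inter_prod_cylinder (h1 : MeasurePreserving (shift 1) μ μ) (hs : MeasurableSet s)
    (hinv : skew ⁻¹' s = s) {ν : Measure ℕ} [IsProbabilityMeasure ν]
    (hiid : iIndepFun (fun i (η : ℕ → ℕ) => η i) P) (hlaw : ∀ i, P.map (fun η => η i) = ν)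
    {c : ℝ≥0∞} (hc : (fun ω => P (Prod.mk ω ⁻¹' s)) =ᵐ[μ] fun _ => c)
    {A : Set (ℤ → α)} (hA : MeasurableSet A) {B : Set (ℕ → ℕ)} (hB : B ∈ cylinders ℕ) :
    (μ.prod P) (s ∩ A ×ˢ B) = c * (μ.prod P) (A ×ˢ B) := by
  obtain ⟨n, S, -, rfl⟩ := hB
  have hBm : MeasurableSet (initSeg n ⁻¹' S) := measurable_initSeg n MeasurableSet.of_discrete
  have hsec (ω : ℤ → α) : P (Prod.mk ω ⁻¹' (s ∩ A ×ˢ (initSeg n ⁻¹' S)))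
      = A.indicator (fun ω => P (initSeg n ⁻¹' S ∩ Prod.mk ω ⁻¹' s)) ω := by
    by_cases hω : ω ∈ A
    · rw [indicator_of_mem hω]; congr 1; ext η; simp [hω, and_comm]
    · rw [indicator_of_notMem hω, ← measure_empty (μ := P)]; congr 1; ext η; simp [hω]
  have hinner (z : ℤ) : ∫⁻ ω in A, P (Prod.mk (shift z ω) ⁻¹' s) ∂μ = c * μ A := by
    rw [← setLIntegral_const]
    exact lintegral_congr_ae (ae_restrict_of_ae
      (hc.comp_tendsto (measurePreserving_shift h1 z).quasiMeasurePreserving.tendsto_ae))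
  rw [Measure.prod_apply (hs.inter (hA.prod hBm)), lintegral_congr hsec, lintegral_indicator hA]
  simp_rw [measure_initSeg_preimage_inter_section hs hinv (map_initSeg_iterate_tail hiid hlaw n)]
  rw [lintegral_lintegral_swap ?_]
  · simp_rw [hinner]
    rw [setLIntegral_const, Measure.prod_prod]
    ring
  · have hsum : Measurable fun η : ℕ → ℕ => ∑ i : Fin n, (η i : ℤ) :=
      Finset.measurable_sum _ fun i _ => measurable_from_nat.comp (measurable_pi_apply (i : ℕ))
    have hjoint : Measurable fun q : (ℤ → α) × (ℕ → ℕ) =>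
        P (Prod.mk (shift (∑ i : Fin n, (q.2 i : ℤ)) q.1) ⁻¹' s) :=
      (measurable_measure_prodMk_left hs).comp
        (measurable_shift_apply (hsum.comp measurable_snd) measurable_fst)
    exact hjoint.aemeasurable

end Skew

end RandomShift

open RandomShift

theorem stmt13_general (μ : Measure (ℤ → ℝ)) [IsProbabilityMeasure μ]
    (hshift : Ergodic (fun ω : ℤ → ℝ => fun k => ω (k + 1)) μ)
    (P : Measure (ℕ → ℕ)) [IsProbabilityMeasure P] (ν : Measure ℕ) [IsProbabilityMeasure ν]
    (hiid : ProbabilityTheory.iIndepFun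
      (fun i (η : ℕ → ℕ) => η i) P)
    (hlaw : ∀ i : ℕ, P.map (fun η : ℕ → ℕ => η i) = ν)
    (hgcd : ∀ m : ℕ, (∀ k : ℕ, ν {k} ≠ 0 → m ∣ k) → m = 1) :
    Ergodic (fun p : (ℤ → ℝ) × (ℕ → ℕ) =>
        ((fun k : ℤ => p.1 (k + p.2 0)), fun n : ℕ => p.2 (n + 1)))
      (μ.prod P) := by
  have h1 : MeasurePreserving (shift 1) μ μ := hshift.toMeasurePreserving
  refine ⟨measurePreserving_skew h1 (map_tail_of_iIndepFun hiid hlaw), ⟨fun s hs hinv => ?_⟩⟩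
  obtain ⟨c, hc⟩ := section_measure_ae_eq_const hshift hs hinv hiid hlaw hgcd
  have hsc : (μ.prod P) s = c := by
    rw [Measure.prod_apply hs, lintegral_congr_ae hc, lintegral_const, measure_univ, mul_one]
  have h01 := measure_eq_zero_or_one_of_measure_inter_eq_mul
    (isPiSystem_measurableSet.prod isPiSystem_cylinders)
    (generateFrom_eq_prod generateFrom_measurableSet generateFrom_cylinders
      isCountablySpanning_measurableSet isCountablySpanning_cylinders) hs
    (by
      rintro _ ⟨A, hA, B, hB, rfl⟩
      rw [hsc]
      exact measure_inter_prod_cylinder h1 hs hinv hiid hlaw hc hA hB)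
  rw [eventuallyConst_set', ae_eq_empty, ae_eq_univ_iff_measure_eq hs.nullMeasurableSet,
    measure_univ]
  exact h01

/-- Let `μ` be a shift-ergodic probability measure on `Ω = ℝ^ℤ`, and let `P` be a
probability measure on `Ξ = ℕ^ℕ` making the coordinates i.i.d. positive integers with finite
expectation and with `gcd{k : P(η₁ = k) > 0} = 1`. Then the skew transformation
`T(ω,η) = (τ_{η₁}ω, shift η)` is ergodic (in particular measure preserving) for `μ ⊗ P`. -/
theorem stmt13 (μ : Measure (ℤ → ℝ)) [IsProbabilityMeasure μ]
    (hshift : Ergodic (fun ω : ℤ → ℝ => fun k => ω (k + 1)) μ)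
    (P : Measure (ℕ → ℕ)) [IsProbabilityMeasure P] (ν : Measure ℕ) [IsProbabilityMeasure ν]
    (hiid : ProbabilityTheory.iIndepFun
      (fun i (η : ℕ → ℕ) => η i) P)
    (hlaw : ∀ i : ℕ, P.map (fun η : ℕ → ℕ => η i) = ν)
    (hpos : ν {0} = 0)
    (hmean : ∫⁻ k, (k : ENNReal) ∂ν < ⊤)
    (hgcd : ∀ m : ℕ, (∀ k : ℕ, ν {k} ≠ 0 → m ∣ k) → m = 1) :
    Ergodic (fun p : (ℤ → ℝ) × (ℕ → ℕ) =>
        ((fun k : ℤ => p.1 (k + p.2 0)), fun n : ℕ => p.2 (n + 1)))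
      (μ.prod P) :=
  stmt13_general μ hshift P ν hiid hlaw hgcd
end

section
/- Let λ ∈ (0,1), d > 0. For each environment consisting of a strictly increasing sequence (x_k) with x_0 = 0 and gaps ≥ d, and u ≡ 0, consider the one-step jump probability to the right p(ω) := P_0^ω(X_1 ≥ 1) = (∑_{j≥1} e^{-(1-λ)x_j}) / (∑_{j≥1} e^{-(1-λ)x_j} + ∑_{j≤-1} e^{(1+λ)x_j}). Writing Z_0 = x_1 and Z_{-1} = -x_{-1}, there exist constants K₁, K₂ > 0 depending only on d, λ such that K₂ · e^{-(1-λ)Z_0} / (e^{-(1+λ)Z_{-1}} + e^{-(1-λ)Z_0}) ≤ p(ω) ≤ K₁ · e^{-(1-λ)Z_0 + (1+λ)Z_{-1}}. In particular 1/p(ω) is comparable, up to multiplicative constants and an additive constant, to e^{(1-λ)Z_0 - (1+λ)Z_{-1}}. -/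
/-! The gap condition makes the terms of each one-sided sum decay at least geometrically with
ratio `exp (-(1 - λ) d)` (the left sum, with the larger rate `1 + λ`, decays even faster). Hence
`S⁺` and `S⁻` lie between their nearest-neighbour terms `exp (-(1 - λ) x₁)`, `exp ((1 + λ) x₋₁)`
and `C = (1 - exp (-(1 - λ) d))⁻¹` times them, and the four bounds on `p = S⁺ / (S⁺ + S⁻)` are
elementary consequences of this two-sided comparison. -/

open Real Set

section GeometricDomination

variable {f : ℕ → ℝ} {r : ℝ}

theorem summable_of_succ_le_mul (hf : ∀ j, 0 ≤ f j) (hr₀ : 0 ≤ r) (hr₁ : r < 1)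
    (h : ∀ j, f (j + 1) ≤ r * f j) : Summable f :=
  ((summable_geometric_of_lt_one hr₀ hr₁).mul_right (f 0)).of_nonneg_of_le hf
    fun j => le_geom hr₀ j fun k _ => h k

theorem tsum_le_of_succ_le_mul (hf : ∀ j, 0 ≤ f j) (hr₀ : 0 ≤ r) (hr₁ : r < 1)
    (h : ∀ j, f (j + 1) ≤ r * f j) : ∑' j, f j ≤ (1 - r)⁻¹ * f 0 :=
  calc ∑' j, f j ≤ ∑' j, r ^ j * f 0 :=
        (summable_of_succ_le_mul hf hr₀ hr₁ h).tsum_le_tsum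
          (fun j => le_geom hr₀ j fun k _ => h k)
          ((summable_geometric_of_lt_one hr₀ hr₁).mul_right (f 0))
    _ = (1 - r)⁻¹ * f 0 := by rw [tsum_mul_right, tsum_geometric_of_lt_one hr₀ hr₁]

end GeometricDomination

section GappedExponentialSums

variable {a c d : ℝ}

theorem exp_neg_mul_succ_le_of_gap {y : ℕ → ℝ} (hd : 0 ≤ d) (hc : 0 ≤ c) (hca : c ≤ a)
    (hy : ∀ j, d ≤ y (j + 1) - y j) (j : ℕ) :
    exp (-a * y (j + 1)) ≤ exp (-(c * d)) * exp (-a * y j) := by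
  rw [← exp_add, exp_le_exp]
  nlinarith [hy j, mul_nonneg (sub_nonneg.2 hca) hd,
    mul_nonneg (hc.trans hca) (sub_nonneg.2 (hy j))]

theorem tsum_exp_neg_mul_mem_Icc_of_gap {y : ℕ → ℝ} (hd : 0 < d) (hc : 0 < c) (hca : c ≤ a)
    (hy : ∀ j, d ≤ y (j + 1) - y j) :
    ∑' j, exp (-a * y j) ∈ Icc (exp (-a * y 0)) ((1 - exp (-(c * d)))⁻¹ * exp (-a * y 0)) := by
  have hr₁ : exp (-(c * d)) < 1 := exp_lt_one_iff.2 (neg_lt_zero.2 (mul_pos hc hd))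
  have hsucc := exp_neg_mul_succ_le_of_gap hd.le hc.le hca hy
  have hf : ∀ j, 0 ≤ exp (-a * y j) := fun j => (exp_pos _).le
  exact ⟨(summable_of_succ_le_mul hf (exp_pos _).le hr₁ hsucc).le_tsum 0 fun j _ => hf j,
    tsum_le_of_succ_le_mul hf (exp_pos _).le hr₁ hsucc⟩

variable {x : ℤ → ℝ}

theorem tsum_exp_neg_mul_right_mem_Icc_of_gap (hd : 0 < d) (hc : 0 < c) (hca : c ≤ a)
    (hx : ∀ k, d ≤ x (k + 1) - x k) :
    ∑' j : ℕ, exp (-a * x (j + 1)) ∈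
      Icc (exp (-a * x 1)) ((1 - exp (-(c * d)))⁻¹ * exp (-a * x 1)) := by
  simpa using tsum_exp_neg_mul_mem_Icc_of_gap (y := fun j : ℕ => x (j + 1)) hd hc hca
    fun j => by simpa [add_assoc] using hx (j + 1)

theorem tsum_exp_mul_left_mem_Icc_of_gap (hd : 0 < d) (hc : 0 < c) (hca : c ≤ a)
    (hx : ∀ k, d ≤ x (k + 1) - x k) :
    ∑' j : ℕ, exp (a * x (-1 - j)) ∈
      Icc (exp (a * x (-1))) ((1 - exp (-(c * d)))⁻¹ * exp (a * x (-1))) := by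
  simpa using tsum_exp_neg_mul_mem_Icc_of_gap (y := fun j : ℕ => -x (-1 - j)) hd hc hca
    fun j => by simpa [sub_add_eq_sub_sub, le_sub_iff_add_le, add_comm] using hx (-1 - (j + 1))

end GappedExponentialSums

theorem div_add_bounds_of_mem_Icc {S T a b C : ℝ} (ha : 0 < a) (hb : 0 < b)
    (hS : S ∈ Icc a (C * a)) (hT : T ∈ Icc b (C * b)) :
    C⁻¹ * (a / (b + a)) ≤ S / (S + T) ∧ S / (S + T) ≤ C * (a / b) ∧
      1 / (S / (S + T)) ≤ C * (b / a) + 1 ∧ b / a ≤ C * (1 / (S / (S + T))) + 1 := by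
  obtain ⟨hS₁, hS₂⟩ := hS
  obtain ⟨hT₁, hT₂⟩ := hT
  have hC : 1 ≤ C := le_of_mul_le_mul_right (by linarith) ha
  have hS₀ : 0 < S := ha.trans_le hS₁
  have hT₀ : 0 < T := hb.trans_le hT₁
  rw [one_div_div]
  refine ⟨?_, ?_, ?_, ?_⟩
  · rw [inv_mul_eq_div, div_div, div_le_div_iff₀ (by positivity) (by positivity)]
    nlinarith [mul_le_mul_of_nonneg_left (add_le_add hS₂ hT₂) ha.le]
  · rw [mul_div_assoc', div_le_div_iff₀ (by positivity) hb]
    nlinarith [mul_le_mul hS₂ hT₁ hb.le (by positivity)]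
  · rw [add_div, div_self hS₀.ne', add_comm, add_le_add_iff_right, mul_div_assoc',
      div_le_div_iff₀ hS₀ ha]
    nlinarith [mul_le_mul hT₂ hS₁ ha.le (by positivity)]
  · have h : b / a ≤ C * ((S + T) / S) := by
      rw [mul_div_assoc', div_le_div_iff₀ ha hS₀]
      nlinarith [mul_le_mul hS₂ hT₁ hb.le (by positivity)]
    linarith

/-- With `u ≡ 0`, `p(ω) = S⁺/(S⁺+S⁻)` where `S⁺ = ∑_{j≥1} e^{-(1-λ)x_j}` and
`S⁻ = ∑_{j≤-1} e^{(1+λ)x_j}`, and `Z_0 = x_1`, `Z_{-1} = -x_{-1}`, there are constants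
`K₁, K₂ > 0` depending only on `d, λ` with
`K₂ e^{-(1-λ)Z₀}/(e^{-(1+λ)Z₋₁} + e^{-(1-λ)Z₀}) ≤ p(ω) ≤ K₁ e^{-(1-λ)Z₀+(1+λ)Z₋₁}`;
in particular `1/p(ω)` is comparable to `e^{(1-λ)Z₀-(1+λ)Z₋₁}` up to multiplicative and
additive constants. -/
theorem stmt16 (d lam : ℝ) (hd : 0 < d) (hlam0 : 0 < lam) (hlam1 : lam < 1) :
    ∃ K₁ K₂ K₃ K₄ : ℝ, 0 < K₁ ∧ 0 < K₂ ∧ 0 < K₃ ∧ 0 < K₄ ∧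
      ∀ x : ℤ → ℝ, StrictMono x → x 0 = 0 → (∀ k : ℤ, d ≤ x (k + 1) - x k) →
        ∀ Splus Sminus p Z₀ Zm₁ : ℝ,
          Splus = (∑' j : ℕ, Real.exp (-(1 - lam) * x (j + 1))) →
          Sminus = (∑' j : ℕ, Real.exp ((1 + lam) * x (-1 - j))) →
          p = Splus / (Splus + Sminus) →
          Z₀ = x 1 → Zm₁ = -x (-1) →
          (K₂ * (Real.exp (-(1 - lam) * Z₀)
              / (Real.exp (-(1 + lam) * Zm₁) + Real.exp (-(1 - lam) * Z₀))) ≤ p) ∧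
          (p ≤ K₁ * Real.exp (-(1 - lam) * Z₀ + (1 + lam) * Zm₁)) ∧
          (1 / p ≤ K₃ * Real.exp ((1 - lam) * Z₀ - (1 + lam) * Zm₁) + K₄) ∧
          (Real.exp ((1 - lam) * Z₀ - (1 + lam) * Zm₁) ≤ K₃ * (1 / p) + K₄) := by
  have hc : 0 < 1 - lam := sub_pos.2 hlam1
  have hC : 0 < (1 - exp (-((1 - lam) * d)))⁻¹ :=
    inv_pos.2 (sub_pos.2 (exp_lt_one_iff.2 (neg_lt_zero.2 (mul_pos hc hd))))
  refine ⟨_, _, _, 1, hC, inv_pos.2 hC, hC, one_pos, ?_⟩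
  rintro x - - hx _ _ _ _ _ rfl rfl rfl rfl rfl
  have hright := tsum_exp_neg_mul_right_mem_Icc_of_gap hd hc le_rfl hx
  have hleft := tsum_exp_mul_left_mem_Icc_of_gap (a := 1 + lam) hd hc (by linarith) hx
  have hratio : exp (-(1 - lam) * x 1 + (1 + lam) * -x (-1)) =
      exp (-(1 - lam) * x 1) / exp ((1 + lam) * x (-1)) := by
    rw [← exp_sub]; ring_nf
  have hratio' : exp ((1 - lam) * x 1 - (1 + lam) * -x (-1)) =
      exp ((1 + lam) * x (-1)) / exp (-(1 - lam) * x 1) := by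
    rw [← exp_sub]; ring_nf
  rw [hratio, hratio', neg_mul_neg]
  exact div_add_bounds_of_mem_Icc (exp_pos _) (exp_pos _) hright hleft
end

section
/- Let λ ∈ (0,1), d ≥ 1 (say d=1), γ ∈ [1,∞), and for an integer j ≥ 1 define A(λ,γ,j) = ∑_{k≥1} k e^{-(1-λ)γ(kj + k(k-1)/2)}, B(λ,γ,j) = ∑_{1≤k≤j-1} k e^{-(1+λ)γ(kj - k(k+1)/2)}, and C(λ,γ,j) = ∑_{k≥j} k e^{-(1+λ)γ(j(j-1)/2 + k - j + 1)}. If λ > 1/3, then lim_{γ→∞} sup_{j≥1} [B(λ,γ,j) + C(λ,γ,j)] e^{(1-λ)γ j} = 0; in particular for γ large enough, A(λ,γ,j) > B(λ,γ,j) + C(λ,γ,j) for every j ≥ 1 (since A(λ,γ,j) ≥ e^{-(1-λ)γ j}). -/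
/-!
Write `a = (1 + λ)γ` and `b = (1 - λ)γ`. Every exponent occurring in `B` is at least `a j / 2`,
and so is the leading exponent of `C`, whose tail in `n` is geometric with ratio `e^{-a} ≤ 1/2`.
Hence `(B + C) e^{bj} ≤ 5 j² e^{-(a/2 - b) j} ≤ 5 e^{-(a/2 - b)}` once `a/2 - b ≥ 2`, and
`a/2 - b = (3λ - 1)γ/2 → ∞` because `λ > 1/3`. The term `k = 0` of `A` alone is `e^{-bj}`.
-/

open Real Finset Filter

lemma hasSum_add_natCast_mul_geometric {x : ℝ} (hx₀ : 0 ≤ x) (hx₁ : x < 1) (p : ℝ) :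
    HasSum (fun n : ℕ ↦ (p + n) * x ^ n) (p * (1 - x)⁻¹ + x / (1 - x) ^ 2) := by
  simpa only [add_mul] using ((hasSum_geometric_of_lt_one hx₀ hx₁).mul_left p).add
    (hasSum_coe_mul_geometric_of_norm_lt_one (by rwa [Real.norm_of_nonneg hx₀]))

lemma tsum_add_natCast_mul_geometric_le {x : ℝ} (hx₀ : 0 ≤ x) (hx : x ≤ 1 / 2) {p : ℝ}
    (hp : 0 ≤ p) : ∑' n : ℕ, (p + n) * x ^ n ≤ 2 * p + 2 := by
  rw [(hasSum_add_natCast_mul_geometric hx₀ (by linarith) p).tsum_eq]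
  have h2 : (1 - x)⁻¹ ≤ 2 := by rw [inv_le_comm₀ (by linarith) two_pos]; linarith
  have h4 : x / (1 - x) ^ 2 ≤ 2 := by
    rw [div_le_iff₀ (by nlinarith)]; nlinarith
  nlinarith

lemma exp_neg_le_half {a : ℝ} (ha : 1 ≤ a) : exp (-a) ≤ 1 / 2 := by
  have h := add_one_le_exp 1
  calc exp (-a) ≤ exp (-1) := exp_le_exp.2 (by linarith)
    _ = (exp 1)⁻¹ := exp_neg 1
    _ ≤ 1 / 2 := by rw [one_div]; exact inv_anti₀ two_pos (by linarith)

lemma sq_mul_exp_neg_mul_le {t x : ℝ} (ht : 2 ≤ t) (hx : 1 ≤ x) :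
    x ^ 2 * exp (-(t * x)) ≤ exp (-t) := by
  have hx_le : x ≤ exp (x - 1) := by linarith [add_one_le_exp (x - 1)]
  calc x ^ 2 * exp (-(t * x)) ≤ exp (x - 1) ^ 2 * exp (-(t * x)) := by gcongr
    _ = exp (-t + (2 - t) * (x - 1)) := by rw [← exp_nat_mul, ← exp_add]; push_cast; ring_nf
    _ ≤ exp (-t) := exp_le_exp.2 (by nlinarith)

lemma sum_Icc_mul_exp_le {a : ℝ} (ha : 0 ≤ a) (j : ℕ) :
    ∑ k ∈ Icc 1 (j - 1), (k : ℝ) * exp (-(a * ((k : ℝ) * j - (k : ℝ) * ((k : ℝ) + 1) / 2)))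
      ≤ (j : ℝ) ^ 2 * exp (-(a * j / 2)) := by
  have hterm : ∀ k ∈ Icc 1 (j - 1),
      (k : ℝ) * exp (-(a * ((k : ℝ) * j - (k : ℝ) * ((k : ℝ) + 1) / 2)))
        ≤ j * exp (-(a * j / 2)) := by
    intro k hk
    obtain ⟨hk₁, hkj⟩ : (1 : ℝ) ≤ k ∧ (k : ℝ) + 1 ≤ j := by
      simp only [mem_Icc] at hk; constructor <;> norm_cast <;> omega
    have hexp : (j : ℝ) / 2 ≤ k * j - k * (k + 1) / 2 := by nlinarith
    gcongr
    · exact_mod_cast (by linarith : (k : ℝ) ≤ j)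
    · nlinarith [mul_le_mul_of_nonneg_left hexp ha]
  calc _ ≤ #(Icc 1 (j - 1)) • ((j : ℝ) * exp (-(a * j / 2))) := sum_le_card_nsmul _ _ _ hterm
    _ ≤ (j : ℝ) * ((j : ℝ) * exp (-(a * j / 2))) := by
      rw [nsmul_eq_mul, Nat.card_Icc]; gcongr; omega
    _ = (j : ℝ) ^ 2 * exp (-(a * j / 2)) := by ring

lemma tsum_mul_exp_le {a : ℝ} (ha : 1 ≤ a) (j : ℕ) :
    ∑' n : ℕ, ((j : ℝ) + n) * exp (-(a * ((j : ℝ) * ((j : ℝ) - 1) / 2 + n + 1)))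
      ≤ (2 * j + 2) * exp (-(a * j / 2)) := by
  have hsplit : ∀ n : ℕ, ((j : ℝ) + n) * exp (-(a * ((j : ℝ) * ((j : ℝ) - 1) / 2 + n + 1)))
      = exp (-(a * ((j : ℝ) * ((j : ℝ) - 1) / 2 + 1))) * (((j : ℝ) + n) * exp (-a) ^ n) := by
    intro n; rw [← exp_nat_mul, mul_left_comm, ← exp_add]; ring_nf
  simp only [hsplit, tsum_mul_left]
  calc _ ≤ exp (-(a * ((j : ℝ) * ((j : ℝ) - 1) / 2 + 1))) * (2 * j + 2) := by
        gcongr; exact tsum_add_natCast_mul_geometric_le (exp_pos _).le (exp_neg_le_half ha)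
          (Nat.cast_nonneg j)
    _ ≤ exp (-(a * j / 2)) * (2 * j + 2) := by
        gcongr; nlinarith [sq_nonneg ((j : ℝ) - 1)]
    _ = _ := mul_comm _ _

lemma exp_neg_mul_le_tsum {b : ℝ} (hb : 0 < b) (j : ℕ) :
    exp (-(b * j)) ≤
      ∑' k : ℕ, ((k : ℝ) + 1) * exp (-(b * (((k : ℝ) + 1) * j + ((k : ℝ) + 1) * k / 2))) := by
  have hsummable : Summable fun k : ℕ ↦
      ((k : ℝ) + 1) * exp (-(b * (((k : ℝ) + 1) * j + ((k : ℝ) + 1) * k / 2))) := by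
    refine Summable.of_nonneg_of_le (fun k ↦ by positivity) (fun k ↦ ?_)
      (hasSum_add_natCast_mul_geometric (exp_pos (-(b / 2))).le
        (exp_lt_one_iff.2 (by linarith)) 1).summable
    rw [← exp_nat_mul, add_comm (1 : ℝ)]
    gcongr
    have hk : (0 : ℝ) ≤ k := Nat.cast_nonneg k
    nlinarith [mul_nonneg hb.le (mul_nonneg (by linarith : (0 : ℝ) ≤ k + 1) (Nat.cast_nonneg j)),
      mul_nonneg hb.le (mul_nonneg hk hk)]
  simpa using hsummable.le_tsum 0 (fun k _ ↦ by positivity)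

lemma sum_add_tsum_mul_exp_le {a b : ℝ} (ha : 1 ≤ a) (hab : 2 ≤ a / 2 - b) {j : ℕ} (hj : 1 ≤ j) :
    (∑ k ∈ Icc 1 (j - 1), (k : ℝ) * exp (-(a * ((k : ℝ) * j - (k : ℝ) * ((k : ℝ) + 1) / 2))) +
      ∑' n : ℕ, ((j : ℝ) + n) * exp (-(a * ((j : ℝ) * ((j : ℝ) - 1) / 2 + n + 1)))) *
        exp (b * j) ≤ 5 * exp (-(a / 2 - b)) := by
  have hj' : (1 : ℝ) ≤ j := by exact_mod_cast hj
  calc _ ≤ ((j : ℝ) ^ 2 * exp (-(a * j / 2)) + (2 * j + 2) * exp (-(a * j / 2))) * exp (b * j) := by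
        gcongr
        exacts [sum_Icc_mul_exp_le (by linarith) j, tsum_mul_exp_le ha j]
    _ = ((j : ℝ) ^ 2 + 2 * j + 2) * exp (-((a / 2 - b) * j)) := by
        rw [← add_mul, mul_assoc, ← exp_add]; ring_nf
    _ ≤ 5 * ((j : ℝ) ^ 2 * exp (-((a / 2 - b) * j))) := by
        rw [← mul_assoc]; gcongr; nlinarith
    _ ≤ 5 * exp (-(a / 2 - b)) := by gcongr; exact sq_mul_exp_neg_mul_le hab hj'

/-- With
`A(λ,γ,j) = ∑_{k≥1} k e^{-(1-λ)γ(kj + k(k-1)/2)}`,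
`B(λ,γ,j) = ∑_{1≤k≤j-1} k e^{-(1+λ)γ(kj - k(k+1)/2)}`,
`C(λ,γ,j) = ∑_{k≥j} k e^{-(1+λ)γ(j(j-1)/2 + k - j + 1)}`,
if `λ ∈ (1/3, 1)` then `sup_{j≥1} (B+C) e^{(1-λ)γj} → 0` as `γ → ∞`; in particular for `γ`
large enough `A > B + C` for every `j ≥ 1` (as `A ≥ e^{-(1-λ)γj}`). -/
theorem stmt18 (lam : ℝ) (hlam : 1 / 3 < lam) (hlam1 : lam < 1)
    (A B C : ℝ → ℕ → ℝ)
    (hA : ∀ γ : ℝ, ∀ j : ℕ, A γ j =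
      ∑' k : ℕ, ((k : ℝ) + 1) *
        Real.exp (-(1 - lam) * γ * (((k : ℝ) + 1) * j + ((k : ℝ) + 1) * k / 2)))
    (hB : ∀ γ : ℝ, ∀ j : ℕ, B γ j =
      ∑ k ∈ Finset.Icc 1 (j - 1), (k : ℝ) *
        Real.exp (-(1 + lam) * γ * ((k : ℝ) * j - (k : ℝ) * ((k : ℝ) + 1) / 2)))
    (hC : ∀ γ : ℝ, ∀ j : ℕ, C γ j =
      ∑' n : ℕ, ((j : ℝ) + n) *
        Real.exp (-(1 + lam) * γ * ((j : ℝ) * ((j : ℝ) - 1) / 2 + (n : ℝ) + 1))) :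
    (∀ ε : ℝ, 0 < ε → ∃ γ₀ : ℝ, 1 ≤ γ₀ ∧ ∀ γ : ℝ, γ₀ ≤ γ → ∀ j : ℕ, 1 ≤ j →
        (B γ j + C γ j) * Real.exp ((1 - lam) * γ * j) < ε) ∧
    (∃ γ₀ : ℝ, 1 ≤ γ₀ ∧ ∀ γ : ℝ, γ₀ ≤ γ → ∀ j : ℕ, 1 ≤ j →
        B γ j + C γ j < A γ j) := by
  simp only [neg_mul] at hA hB hC
  have hgap : Tendsto (fun γ ↦ (1 + lam) * γ / 2 - (1 - lam) * γ) atTop atTop := by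
    refine (tendsto_id.const_mul_atTop (by linarith : 0 < (3 * lam - 1) / 2)).congr fun γ ↦ ?_
    simp only [id]; ring
  have hbound :
      Tendsto (fun γ ↦ 5 * exp (-((1 + lam) * γ / 2 - (1 - lam) * γ))) atTop (nhds 0) := by
    simpa using (tendsto_exp_neg_atTop_nhds_zero.comp hgap).const_mul 5
  have hdecay : ∀ ε : ℝ, 0 < ε → ∃ γ₀ : ℝ, 1 ≤ γ₀ ∧ ∀ γ : ℝ, γ₀ ≤ γ → ∀ j : ℕ, 1 ≤ j →
      (B γ j + C γ j) * exp ((1 - lam) * γ * j) < ε := by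
    intro ε hε
    obtain ⟨γ₀, hγ₀⟩ := eventually_atTop.1 <| (eventually_ge_atTop 1).and <|
      (hgap.eventually_ge_atTop 2).and (hbound.eventually (gt_mem_nhds hε))
    refine ⟨γ₀ ⊔ 1, le_sup_right, fun γ hγ j hj ↦ ?_⟩
    obtain ⟨hγ1, hgapγ, hsmall⟩ := hγ₀ γ (le_sup_left.trans hγ)
    rw [hB, hC]
    exact (sum_add_tsum_mul_exp_le (by nlinarith) hgapγ hj).trans_lt hsmall
  refine ⟨hdecay, ?_⟩
  obtain ⟨γ₀, hγ₀1, hγ₀⟩ := hdecay 1 one_pos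
  refine ⟨γ₀, hγ₀1, fun γ hγ j hj ↦ ?_⟩
  calc B γ j + C γ j < exp (-((1 - lam) * γ * j)) := by
        rw [exp_neg, ← one_div, lt_div_iff₀ (exp_pos _)]; exact hγ₀ γ hγ j hj
    _ ≤ A γ j := by
        rw [hA]; exact exp_neg_mul_le_tsum (by nlinarith) j
end
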